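/- arXiv:2501.03096 — 8 statements merged into one kernel-verified Lean document; each statement's English description precedes it below -/
import Mathlib

section
/- Let D be a symmetric n×n real matrix and let λ be an eigenvalue of D of maximal absolute value, with λ < 0. Then the Dirac measures δ_z with z a unit eigenvector of D for λ are minimizers of the energy E(μ) = ∬ exp(⟪x, D y⟫) dμ(x) dμ(y) over probability measures μ on the unit sphere, i.e. E(μ) ≥ e^λ for all such μ, with equality for μ = δ_z. -/
open MeasureTheory RealInnerProductSpace

noncomputable def energy {n : ℕ} (D : Matrix (Fin n) (Fin n) ℝ)
    (μ : Measure (EuclideanSpace ℝ (Fin n))) : ℝ :=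
  ∫ x, ∫ y, Real.exp ⟪x, Matrix.toEuclideanLin D y⟫ ∂μ ∂μ

def IsEigenvalue {n : ℕ} (D : Matrix (Fin n) (Fin n) ℝ) (l : ℝ) : Prop :=
  ∃ v : EuclideanSpace ℝ (Fin n), v ≠ 0 ∧ Matrix.toEuclideanLin D v = l • v

/-!
Write `T` for the self-adjoint operator of `D`. Its operator norm is its spectral radius, which
is at most `|λ|` by the choice of `λ`; hence `⟪x, T y⟫ ≥ -‖T‖ = λ` for all unit vectors `x`, `y`, and
integrating `exp ⟪x, T y⟫ ≥ exp λ` against `μ ⊗ μ`, which lives on a compact set, gives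
`E(μ) ≥ exp λ`. For an eigenvector `z`, `E(δ_z) = exp ⟪z, λ z⟫ = exp λ`.
-/

theorem le_integral_integral_of_le_on {X Y : Type*} [TopologicalSpace X] [T2Space X]
    [SecondCountableTopology X] [MeasurableSpace X] [OpensMeasurableSpace X]
    [TopologicalSpace Y] [T2Space Y] [MeasurableSpace Y] [OpensMeasurableSpace Y] {μ : Measure X} {ν : Measure Y} [IsProbabilityMeasure μ]
    [IsProbabilityMeasure ν] {K : Set X} {L : Set Y} (hK : IsCompact K) (hL : IsCompact L)
    (hμK : ∀ᵐ x ∂μ, x ∈ K) (hνL : ∀ᵐ y ∂ν, y ∈ L) {f : X → Y → ℝ}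
    (hf : Continuous (Function.uncurry f)) {c : ℝ} (hc : ∀ x ∈ K, ∀ y ∈ L, c ≤ f x y) :
    c ≤ ∫ x, ∫ y, f x y ∂ν ∂μ := by
  have hKL : MeasurableSet (K ×ˢ L) := (hK.prod hL).measurableSet
  have hrestrict : (μ.prod ν).restrict (K ×ˢ L) = μ.prod ν := by
    rw [← Measure.prod_restrict, Measure.restrict_eq_self_of_ae_mem hμK,
      Measure.restrict_eq_self_of_ae_mem hνL]
  have hint : IntegrableOn (Function.uncurry f) (K ×ˢ L) (μ.prod ν) :=
    hf.continuousOn.integrableOn_compact (hK.prod hL)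
  have hmass : (μ.prod ν).real (K ×ˢ L) = 1 := by
    simpa [hKL] using congrArg (fun m : Measure (X × Y) => m.real Set.univ) hrestrict
  calc c = c * (μ.prod ν).real (K ×ˢ L) := by rw [hmass, mul_one]
    _ ≤ ∫ z in K ×ˢ L, Function.uncurry f z ∂(μ.prod ν) :=
      setIntegral_ge_of_const_le_real hKL (measure_ne_top _ _)
        (fun z hz => hc z.1 hz.1 z.2 hz.2) hint
    _ = ∫ x, ∫ y, f x y ∂ν ∂μ := by
      rw [hrestrict, integral_prod _ (hrestrict ▸ hint)]
      rfl

theorem ContinuousLinearMap.norm_le_of_forall_hasEigenvalue {𝕜 E : Type*} [RCLike 𝕜]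
    [NormedAddCommGroup E] [InnerProductSpace 𝕜 E] [FiniteDimensional 𝕜 E] {T : E →L[𝕜] E}
    (hT : (T : E →ₗ[𝕜] E).IsSymmetric) {r : ℝ} (hr : 0 ≤ r)
    (h : ∀ μ, Module.End.HasEigenvalue (T : Module.End 𝕜 E) μ → ‖μ‖ ≤ r) : ‖T‖ ≤ r := by
  have := FiniteDimensional.complete 𝕜 E
  lift r to NNReal using hr
  rw [← coe_nnnorm, NNReal.coe_le_coe, ← ENNReal.coe_le_coe,
    ← T.spectralRadius_eq_nnnorm hT.isSelfAdjoint]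
  refine iSup₂_le fun μ hμ => ENNReal.coe_le_coe.2 ?_
  rw [ContinuousLinearMap.spectrum_eq, ← Module.End.hasEigenvalue_iff_mem_spectrum] at hμ
  exact h μ hμ

theorem ContinuousLinearMap.neg_norm_le_inner_apply {E : Type*} [NormedAddCommGroup E] [InnerProductSpace ℝ E]
    (T : E →L[ℝ] E) {x y : E} (hx : ‖x‖ = 1) (hy : ‖y‖ = 1) : -‖T‖ ≤ ⟪x, T y⟫ := by
  refine neg_le_of_abs_le ?_
  calc |⟪x, T y⟫| ≤ ‖x‖ * ‖T y‖ := abs_real_inner_le_norm _ _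
    _ ≤ ‖T‖ := by simpa [hx, hy] using T.le_opNorm y

theorem isEigenvalue_of_hasEigenvalue {n : ℕ} {D : Matrix (Fin n) (Fin n) ℝ} {l : ℝ}
    (h : Module.End.HasEigenvalue (Matrix.toEuclideanLin D) l) : IsEigenvalue D l := by
  obtain ⟨v, hv⟩ := h.exists_hasEigenvector
  exact ⟨v, hv.2, hv.apply_eq_smul⟩

theorem stmt1_general {n : ℕ} (D : Matrix (Fin n) (Fin n) ℝ) (hD : D.IsSymm)
    (lam : ℝ)
    (hmax : ∀ l : ℝ, IsEigenvalue D l → |l| ≤ |lam|)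
    (hneg : lam < 0) :
    (∀ μ : Measure (EuclideanSpace ℝ (Fin n)), IsProbabilityMeasure μ →
      μ (Metric.sphere (0 : EuclideanSpace ℝ (Fin n)) 1) = 1 →
      Real.exp lam ≤ energy D μ) ∧
    (∀ z : EuclideanSpace ℝ (Fin n), ‖z‖ = 1 →
      Matrix.toEuclideanLin D z = lam • z →
      energy D (Measure.dirac z) = Real.exp lam) := by
  set T := Matrix.toEuclideanCLM (𝕜 := ℝ) D
  have hT : (T : EuclideanSpace ℝ (Fin n) →ₗ[ℝ] EuclideanSpace ℝ (Fin n)).IsSymmetric :=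
    Matrix.isSymmetric_toEuclideanLin_iff.2 (Matrix.isHermitian_iff_isSymm.2 hD)
  have hnorm : ‖T‖ ≤ -lam := T.norm_le_of_forall_hasEigenvalue hT (by linarith)
    fun l hl => abs_of_neg hneg ▸ hmax l (isEigenvalue_of_hasEigenvalue hl)
  refine ⟨fun μ _ hμ => ?_, fun z hz hez => ?_⟩
  · have hsphere : ∀ᵐ x ∂μ, x ∈ Metric.sphere (0 : EuclideanSpace ℝ (Fin n)) 1 :=
      (ae_iff_measure_eq Metric.isClosed_sphere.measurableSet.nullMeasurableSet).2
        (by rw [measure_univ]; exact hμ)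
    refine le_integral_integral_of_le_on (isCompact_sphere 0 1) (isCompact_sphere 0 1)
      hsphere hsphere (by fun_prop) fun x hx y hy => Real.exp_le_exp.2 ?_
    exact (le_neg.1 hnorm).trans
      (T.neg_norm_le_inner_apply (mem_sphere_zero_iff_norm.1 hx) (mem_sphere_zero_iff_norm.1 hy))
  · rw [energy, integral_dirac, integral_dirac, hez, real_inner_smul_right,
      real_inner_self_eq_norm_sq, hz, one_pow, mul_one]

theorem stmt1 {n : ℕ} (D : Matrix (Fin n) (Fin n) ℝ) (hD : D.IsSymm)
    (lam : ℝ) (hlam : IsEigenvalue D lam)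
    (hmax : ∀ l : ℝ, IsEigenvalue D l → |l| ≤ |lam|)
    (hneg : lam < 0) :
    (∀ μ : Measure (EuclideanSpace ℝ (Fin n)), IsProbabilityMeasure μ →
      μ (Metric.sphere (0 : EuclideanSpace ℝ (Fin n)) 1) = 1 →
      Real.exp lam ≤ energy D μ) ∧
    (∀ z : EuclideanSpace ℝ (Fin n), ‖z‖ = 1 →
      Matrix.toEuclideanLin D z = lam • z →
      energy D (Measure.dirac z) = Real.exp lam) :=
  stmt1_general D hD lam hmax hneg
end

section
/- Let D be a symmetric positive semi-definite n×n matrix with nontrivial null space N(D) ∩ S^{n-1} ≠ ∅ (so smallest eigenvalue 0). A probability measure μ on the unit sphere minimizes the energy E(μ) = ∬ exp(⟪x, D y⟫) dμ(x) dμ(y) if and only if μ is concentrated on the null space of D; in that case E(μ) = 1. -/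
open MeasureTheory RealInnerProductSpace

/-!
Factor `D = Bᴴ B`, so that `⟪x, D y⟫ = ⟪B x, B y⟫`. The `m`-th power of this kernel is
`⟪(B x)^⊗m, (B y)^⊗m⟫`, so its double integral against `μ` is `‖∫ (B x)^⊗m dμ‖² ≥ 0`. Bounding `exp`
below by its cubic Taylor polynomial, which is valid on all of `ℝ`, gives
`E(μ) ≥ 1 + ‖∫ (B x)^⊗2 dμ‖² / 2 ≥ 1`. Equality forces `∫ ‖B x‖² dμ = 0`, the trace of
`∫ (B x)^⊗2 dμ`, i.e. `B x = 0`, equivalently `D x = 0`, for `μ`-a.e. `x`. Conversely, if `μ` lives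
on `N(D)` the integrand is `1` almost everywhere, and a point mass on a unit vector of `N(D)` shows
that the minimal energy is `1`.
-/

open scoped Matrix

open Finset in
lemma Real.sum_range_four_le_exp (t : ℝ) : ∑ m ∈ range 4, t ^ m / m.factorial ≤ Real.exp t := by
  rcases le_total 0 t with ht | ht
  · exact Real.sum_le_exp_of_nonneg ht 4
  have hd2 (s : ℝ) :
      HasDerivAt (fun u ↦ Real.exp u - (1 + u + u ^ 2 / 2)) (Real.exp s - (1 + s)) s :=
    ((Real.hasDerivAt_exp s).sub (((hasDerivAt_id s).const_add 1).add
      ((hasDerivAt_pow 2 s).div_const 2))).congr_deriv (by norm_num)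
  have hd3 (s : ℝ) : HasDerivAt (fun u ↦ Real.exp u - (1 + u + u ^ 2 / 2 + u ^ 3 / 6))
      (Real.exp s - (1 + s + s ^ 2 / 2)) s :=
    ((Real.hasDerivAt_exp s).sub ((((hasDerivAt_id s).const_add 1).add
      ((hasDerivAt_pow 2 s).div_const 2)).add ((hasDerivAt_pow 3 s).div_const 6))).congr_deriv
      (by norm_num; ring)
  -- The derivative of `exp - cubic` is `exp - quadratic`, which is monotone and vanishes at `0`.
  have hmono : Monotone (fun u ↦ Real.exp u - (1 + u + u ^ 2 / 2)) :=
    monotone_of_deriv_nonneg (fun s ↦ (hd2 s).differentiableAt)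
      fun s ↦ (hd2 s).deriv ▸ by linarith [Real.add_one_le_exp s]
  have hanti : AntitoneOn (fun u ↦ Real.exp u - (1 + u + u ^ 2 / 2 + u ^ 3 / 6)) (Set.Iic 0) :=
    antitoneOn_of_hasDerivWithinAt_nonpos (convex_Iic 0)
      (fun s _ ↦ (hd3 s).continuousAt.continuousWithinAt)
      (fun s _ ↦ (hd3 s).hasDerivWithinAt) fun s hs ↦ by
        simpa using hmono (le_of_lt (by simpa using hs) : s ≤ 0)
  have := hanti ht (Set.mem_Iic.2 le_rfl) ht
  simp [sum_range_succ, Nat.factorial] at this ⊢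
  linarith

namespace EuclideanSpace

variable {ι : Type*}

def tensorPower (m : ℕ) (v : EuclideanSpace ℝ ι) : EuclideanSpace ℝ (Fin m → ι) :=
  WithLp.toLp 2 fun I ↦ ∏ j, v (I j)

theorem inner_tensorPower [Fintype ι] (m : ℕ) (u v : EuclideanSpace ℝ ι) :
    ⟪tensorPower m u, tensorPower m v⟫ = ⟪u, v⟫ ^ m := by
  classical
  simp only [tensorPower, PiLp.inner_apply, RCLike.inner_apply, conj_trivial]
  rw [← Fin.prod_const, Fintype.prod_sum]
  simp [Finset.prod_mul_distrib]

theorem continuous_tensorPower (m : ℕ) : Continuous (tensorPower (ι := ι) m) := by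
  unfold tensorPower
  fun_prop

theorem norm_tensorPower [Fintype ι] (m : ℕ) (v : EuclideanSpace ℝ ι) :
    ‖tensorPower m v‖ = ‖v‖ ^ m := by
  rw [← pow_left_inj₀ (norm_nonneg _) (by positivity) two_ne_zero, ← real_inner_self_eq_norm_sq,
    inner_tensorPower, real_inner_self_eq_norm_sq, ← pow_mul, ← pow_mul, mul_comm]

theorem inner_sum_tensorPower_two_basisFun [Fintype ι] (v : EuclideanSpace ℝ ι) :
    ⟪∑ i, tensorPower 2 (EuclideanSpace.basisFun ι ℝ i), tensorPower 2 v⟫ = ‖v‖ ^ 2 := by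
  simp_rw [sum_inner, inner_tensorPower, OrthonormalBasis.sum_sq_inner_right]

end EuclideanSpace

section

open EuclideanSpace

variable {X ι : Type*} [MeasurableSpace X] {μ : Measure X} [Fintype ι]

theorem integral_integral_sum_mul_inner {κ : Type*} (s : Finset κ) {E : κ → Type*}
    [∀ i, NormedAddCommGroup (E i)] [∀ i, InnerProductSpace ℝ (E i)] [∀ i, CompleteSpace (E i)]
    (w : κ → ℝ) (ψ : ∀ i, X → E i) (hψ : ∀ i ∈ s, Integrable (ψ i) μ) :
    ∫ x, ∫ y, ∑ i ∈ s, w i * ⟪ψ i x, ψ i y⟫ ∂μ ∂μ = ∑ i ∈ s, w i * ‖∫ x, ψ i x ∂μ‖ ^ 2 := by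
  have inner_integral (x : X) :
      ∫ y, ∑ i ∈ s, w i * ⟪ψ i x, ψ i y⟫ ∂μ = ∑ i ∈ s, w i * ⟪ψ i x, ∫ y, ψ i y ∂μ⟫ := by
    rw [integral_finsetSum _ fun i hi ↦ ((hψ i hi).const_inner _).const_mul _]
    refine Finset.sum_congr rfl fun i hi ↦ ?_
    rw [integral_const_mul, integral_inner (hψ i hi)]
  simp_rw [inner_integral]
  rw [integral_finsetSum _ fun i hi ↦ ((hψ i hi).inner_const _).const_mul _]
  refine Finset.sum_congr rfl fun i hi ↦ ?_
  simp_rw [real_inner_comm (∫ y, ψ i y ∂μ)]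
  rw [integral_const_mul, integral_inner (hψ i hi), real_inner_self_eq_norm_sq]

theorem ae_eq_zero_of_integral_tensorPower_two_eq_zero {φ : X → EuclideanSpace ℝ ι}
    (hint : Integrable (fun x ↦ tensorPower 2 (φ x)) μ) (h : ∫ x, tensorPower 2 (φ x) ∂μ = 0) :
    ∀ᵐ x ∂μ, φ x = 0 := by
  -- `δ` is the identity tensor, so `⟪δ, ·⟫` is the trace.
  set δ := ∑ i, tensorPower 2 (EuclideanSpace.basisFun ι ℝ i)
  have hsq : (fun x ↦ ‖φ x‖ ^ 2) = fun x ↦ ⟪δ, tensorPower 2 (φ x)⟫ := by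
    simp_rw [δ, inner_sum_tensorPower_two_basisFun]
  have hzero : ∫ x, ‖φ x‖ ^ 2 ∂μ = 0 := by
    rw [hsq, integral_inner hint, h, inner_zero_right]
  rw [integral_eq_zero_iff_of_nonneg (fun x ↦ by positivity) (hsq ▸ hint.const_inner δ)] at hzero
  filter_upwards [hzero] with x hx
  simpa using hx

variable {φ : X → EuclideanSpace ℝ ι} {C : ℝ}

theorem integrable_tensorPower_comp [IsFiniteMeasure μ] (hφ : AEStronglyMeasurable φ μ)
    (hC : ∀ᵐ x ∂μ, ‖φ x‖ ≤ C) (m : ℕ) : Integrable (fun x ↦ tensorPower m (φ x)) μ := by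
  refine .of_bound ((continuous_tensorPower m).comp_aestronglyMeasurable hφ) (C ^ m) ?_
  filter_upwards [hC] with x hx
  rw [norm_tensorPower]
  exact pow_le_pow_left₀ (norm_nonneg _) hx m

theorem integrable_comp_inner_prod [IsFiniteMeasure μ] (hφ : AEStronglyMeasurable φ μ)
    (hC : ∀ᵐ x ∂μ, ‖φ x‖ ≤ C) {g : ℝ → ℝ} (hg : Continuous g) :
    Integrable (fun p : X × X ↦ g ⟪φ p.1, φ p.2⟫) (μ.prod μ) := by
  obtain ⟨M, hM⟩ := (isCompact_Icc (a := -(C * C)) (b := C * C)).exists_bound_of_continuousOn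
    hg.continuousOn
  refine .of_bound (hg.comp_aestronglyMeasurable (hφ.comp_fst.inner hφ.comp_snd)) M ?_
  filter_upwards [Measure.quasiMeasurePreserving_fst.ae hC,
    Measure.quasiMeasurePreserving_snd.ae hC] with p h1 h2
  exact hM _ (abs_le.1 ((abs_real_inner_le_norm _ _).trans
    (mul_le_mul h1 h2 (norm_nonneg _) ((norm_nonneg _).trans h1))))

variable [IsProbabilityMeasure μ]

theorem one_add_sq_norm_integral_tensorPower_two_le (hφ : AEStronglyMeasurable φ μ)
    (hC : ∀ᵐ x ∂μ, ‖φ x‖ ≤ C) :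
    1 + ‖∫ x, tensorPower 2 (φ x) ∂μ‖ ^ 2 / 2 ≤ ∫ x, ∫ y, Real.exp ⟪φ x, φ y⟫ ∂μ ∂μ := by
  set taylor : ℝ → ℝ := fun t ↦ ∑ m ∈ Finset.range 4, t ^ m / m.factorial
  have hzeroth : ‖∫ x, tensorPower 0 (φ x) ∂μ‖ = 1 := by
    have hconst (v : EuclideanSpace ℝ ι) : tensorPower 0 v = tensorPower 0 0 := by
      simp [tensorPower]
    simp [hconst, norm_tensorPower]
  calc 1 + ‖∫ x, tensorPower 2 (φ x) ∂μ‖ ^ 2 / 2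
      ≤ ∑ m ∈ Finset.range 4, (m.factorial : ℝ)⁻¹ * ‖∫ x, tensorPower m (φ x) ∂μ‖ ^ 2 := by
        simp only [Finset.sum_range_succ, Finset.sum_range_zero, hzeroth]
        nlinarith [sq_nonneg ‖∫ x, tensorPower 1 (φ x) ∂μ‖,
          sq_nonneg ‖∫ x, tensorPower 3 (φ x) ∂μ‖]
    _ = ∫ x, ∫ y, ∑ m ∈ Finset.range 4,
          (m.factorial : ℝ)⁻¹ * ⟪tensorPower m (φ x), tensorPower m (φ y)⟫ ∂μ ∂μ :=
        (integral_integral_sum_mul_inner _ _ (fun m x ↦ tensorPower m (φ x))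
          fun m _ ↦ integrable_tensorPower_comp hφ hC m).symm
    _ = ∫ x, ∫ y, taylor ⟪φ x, φ y⟫ ∂μ ∂μ := by
        simp_rw [inner_tensorPower, taylor, div_eq_inv_mul]
    _ = ∫ p, taylor ⟪φ p.1, φ p.2⟫ ∂μ.prod μ :=
        (integral_prod _ (integrable_comp_inner_prod hφ hC (by fun_prop))).symm
    _ ≤ ∫ p, Real.exp ⟪φ p.1, φ p.2⟫ ∂μ.prod μ :=
        integral_mono (integrable_comp_inner_prod hφ hC (by fun_prop))
          (integrable_comp_inner_prod hφ hC Real.continuous_exp)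
          fun p ↦ Real.sum_range_four_le_exp _
    _ = ∫ x, ∫ y, Real.exp ⟪φ x, φ y⟫ ∂μ ∂μ :=
        integral_prod _ (integrable_comp_inner_prod hφ hC Real.continuous_exp)

theorem integral_integral_exp_inner_eq_one_of_ae_eq_zero (h : ∀ᵐ x ∂μ, φ x = 0) :
    ∫ x, ∫ y, Real.exp ⟪φ x, φ y⟫ ∂μ ∂μ = 1 := by
  have hinner (x : X) : ∫ y, Real.exp ⟪φ x, φ y⟫ ∂μ = 1 := by
    rw [integral_congr_ae (g := fun _ ↦ 1) (by filter_upwards [h] with y hy; simp [hy])]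
    simp
  simp [hinner]

theorem one_le_integral_integral_exp_inner (hφ : AEStronglyMeasurable φ μ)
    (hC : ∀ᵐ x ∂μ, ‖φ x‖ ≤ C) : 1 ≤ ∫ x, ∫ y, Real.exp ⟪φ x, φ y⟫ ∂μ ∂μ :=
  (le_add_of_nonneg_right (by positivity)).trans
    (one_add_sq_norm_integral_tensorPower_two_le hφ hC)

theorem integral_integral_exp_inner_le_one_iff (hφ : AEStronglyMeasurable φ μ)
    (hC : ∀ᵐ x ∂μ, ‖φ x‖ ≤ C) :
    ∫ x, ∫ y, Real.exp ⟪φ x, φ y⟫ ∂μ ∂μ ≤ 1 ↔ ∀ᵐ x ∂μ, φ x = 0 := by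
  refine ⟨fun h ↦ ae_eq_zero_of_integral_tensorPower_two_eq_zero
    (integrable_tensorPower_comp hφ hC 2) ?_,
    fun h ↦ (integral_integral_exp_inner_eq_one_of_ae_eq_zero h).le⟩
  have hle := one_add_sq_norm_integral_tensorPower_two_le hφ hC
  have hsq : ‖∫ x, tensorPower 2 (φ x) ∂μ‖ ^ 2 = 0 := le_antisymm (by linarith) (by positivity)
  exact norm_eq_zero.1 ((pow_eq_zero_iff two_ne_zero).1 hsq)

end

open scoped ComplexOrder MatrixOrder in
theorem Matrix.PosSemidef.exists_eq_conjTranspose_mul_self {𝕜 n : Type*} [RCLike 𝕜] [Fintype n]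
    [DecidableEq n] {D : Matrix n n 𝕜} (hD : D.PosSemidef) : ∃ B : Matrix n n 𝕜, D = Bᴴ * B :=
  CStarAlgebra.nonneg_iff_eq_star_mul_self.mp hD.nonneg

namespace Matrix

variable {𝕜 m n : Type*} [RCLike 𝕜] [Fintype m] [Fintype n] [DecidableEq m] [DecidableEq n]

theorem toEuclideanLin_conjTranspose_mul_self_apply (B : Matrix m n 𝕜) (x : EuclideanSpace 𝕜 n) :
    toEuclideanLin (Bᴴ * B) x = (toEuclideanLin B).adjoint (toEuclideanLin B x) := by
  rw [← toEuclideanLin_conjTranspose_eq_adjoint]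
  ext i
  simp [mulVec_mulVec]

theorem toEuclideanLin_conjTranspose_mul_self_apply_eq_zero_iff (B : Matrix m n 𝕜)
    (x : EuclideanSpace 𝕜 n) : toEuclideanLin (Bᴴ * B) x = 0 ↔ toEuclideanLin B x = 0 := by
  rw [toEuclideanLin_conjTranspose_mul_self_apply]
  refine ⟨fun h ↦ ?_, fun h ↦ by rw [h, map_zero]⟩
  rw [← inner_self_eq_zero (𝕜 := 𝕜), ← LinearMap.adjoint_inner_right, h, inner_zero_right]

end Matrix

theorem energy_conjTranspose_mul_self {n : ℕ} (B : Matrix (Fin n) (Fin n) ℝ)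
    (μ : Measure (EuclideanSpace ℝ (Fin n))) :
    energy (Bᴴ * B) μ =
      ∫ x, ∫ y, Real.exp ⟪Matrix.toEuclideanLin B x, Matrix.toEuclideanLin B y⟫ ∂μ ∂μ := by
  simp_rw [energy, Matrix.toEuclideanLin_conjTranspose_mul_self_apply,
    LinearMap.adjoint_inner_right]

theorem LinearMap.ae_norm_apply_le_of_measure_sphere_eq_one {E F : Type*}
    [NormedAddCommGroup E] [NormedSpace ℝ E] [FiniteDimensional ℝ E] [MeasurableSpace E]
    [OpensMeasurableSpace E] [NormedAddCommGroup F] [NormedSpace ℝ F] {ν : Measure E}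
    [IsProbabilityMeasure ν] (hν : ν (Metric.sphere 0 1) = 1) (f : E →ₗ[ℝ] F) :
    ∀ᵐ x ∂ν, ‖f x‖ ≤ ‖LinearMap.toContinuousLinearMap f‖ := by
  have hsphere : ∀ᵐ x ∂ν, x ∈ Metric.sphere (0 : E) 1 := by
    rw [ae_mem_iff_measure_eq Metric.isClosed_sphere.measurableSet.nullMeasurableSet, hν,
      measure_univ]
  filter_upwards [hsphere] with x hx
  simpa [mem_sphere_zero_iff_norm.1 hx] using (LinearMap.toContinuousLinearMap f).le_opNorm x

theorem stmt6 {n : ℕ} (D : Matrix (Fin n) (Fin n) ℝ) (hD : D.PosSemidef)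
    (hker : ∃ z : EuclideanSpace ℝ (Fin n), ‖z‖ = 1 ∧ Matrix.toEuclideanLin D z = 0)
    (μ : Measure (EuclideanSpace ℝ (Fin n))) [IsProbabilityMeasure μ]
    (hμ : μ (Metric.sphere (0 : EuclideanSpace ℝ (Fin n)) 1) = 1) :
    ((∀ ν : Measure (EuclideanSpace ℝ (Fin n)), IsProbabilityMeasure ν →
        ν (Metric.sphere (0 : EuclideanSpace ℝ (Fin n)) 1) = 1 →
        energy D μ ≤ energy D ν) ↔
      μ {x : EuclideanSpace ℝ (Fin n) | Matrix.toEuclideanLin D x = 0} = 1) ∧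
    (μ {x : EuclideanSpace ℝ (Fin n) | Matrix.toEuclideanLin D x = 0} = 1 →
      energy D μ = 1) := by
  obtain ⟨B, rfl⟩ := hD.exists_eq_conjTranspose_mul_self
  have hφ {ν : Measure (EuclideanSpace ℝ (Fin n))} :
      AEStronglyMeasurable (Matrix.toEuclideanLin B) ν :=
    (LinearMap.continuous_of_finiteDimensional _).aestronglyMeasurable
  have hkernel : μ {x | Matrix.toEuclideanLin (Bᴴ * B) x = 0} = 1 ↔
      ∀ᵐ x ∂μ, Matrix.toEuclideanLin B x = 0 := by
    rw [← measure_univ (μ := μ), ← ae_iff_measure_eq]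
    · simp_rw [Matrix.toEuclideanLin_conjTranspose_mul_self_apply_eq_zero_iff]
    · exact (isClosed_eq (LinearMap.continuous_of_finiteDimensional _) continuous_const
        ).measurableSet.nullMeasurableSet
  obtain ⟨z, hz, hBz⟩ := hker
  rw [Matrix.toEuclideanLin_conjTranspose_mul_self_apply_eq_zero_iff] at hBz
  simp_rw [energy_conjTranspose_mul_self, hkernel]
  refine ⟨⟨fun hmin ↦ ?_, fun h ν _ hν ↦ ?_⟩, integral_integral_exp_inner_eq_one_of_ae_eq_zero⟩
  · rw [← integral_integral_exp_inner_le_one_iff hφ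
      ((Matrix.toEuclideanLin B).ae_norm_apply_le_of_measure_sphere_eq_one hμ)]
    simpa [integral_dirac, hBz] using hmin (Measure.dirac z) inferInstance
      (Measure.dirac_apply_of_mem (mem_sphere_zero_iff_norm.2 hz))
  · rw [integral_integral_exp_inner_eq_one_of_ae_eq_zero h]
    exact one_le_integral_integral_exp_inner hφ
      ((Matrix.toEuclideanLin B).ae_norm_apply_le_of_measure_sphere_eq_one hν)
end

section
/- If D is a symmetric positive semi-definite matrix, then for every finite signed Borel measure ν on the unit sphere of ℝ^n one has ∬ exp(⟪x, D y⟫) dν(x) dν(y) ≥ 0. -/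
open MeasureTheory RealInnerProductSpace

/-!
Expanding `exp ⟪u, v⟫ = ∑ₖ ⟪u, v⟫ᵏ / k!` and each power `⟪u, v⟫ᵏ` in coordinates with respect to
an orthonormal basis writes the kernel `exp ⟪f x, f y⟫` as a series `∑ᵢ cᵢ gᵢ(x) gᵢ(y)` with
`cᵢ ≥ 0`, where the `gᵢ` are monomials in the coordinates of `f x`. For a bounded `f` the series
may be integrated term by term, and the double integral against `ν` becomes
`∑ᵢ cᵢ (∫ gᵢ dν)² ≥ 0`. With `D = Bᴴ B`, the kernel of the theorem is of this form for `f = B`.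
-/

open scoped Nat

variable {X : Type*} [MeasurableSpace X]

/-- `∬ K d(μ - ρ) d(μ - ρ)`, expanded so that only integrals against measures occur. -/
noncomputable def doubleIntegralSub (μ ρ : Measure X) (K : X → X → ℝ) : ℝ :=
  (∫ x, ∫ y, K x y ∂μ ∂μ) - (∫ x, ∫ y, K x y ∂ρ ∂μ) - (∫ x, ∫ y, K x y ∂μ ∂ρ)
    + ∫ x, ∫ y, K x y ∂ρ ∂ρ

section SumOfProducts

variable {ι : Type*} [Countable ι] {c : ι → ℝ} {g : ι → X → ℝ} {B : ι → ℝ} {K : X → X → ℝ}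

theorem hasSum_integral_integral_of_hasSum_mul (μ σ : Measure X) [IsFiniteMeasure μ]
    [IsFiniteMeasure σ] (hg : ∀ i, Measurable (g i)) (hgB : ∀ i x, ‖g i x‖ ≤ B i)
    (hB : Summable fun i => ‖c i‖ * B i ^ 2)
    (hK : ∀ x y, HasSum (fun i => c i * g i x * g i y) (K x y)) :
    HasSum (fun i => c i * (∫ x, g i x ∂μ) * ∫ y, g i y ∂σ) (∫ x, ∫ y, K x y ∂σ ∂μ) := by
  have hB' : Summable fun i => ‖c i‖ * B i ^ 2 * σ.real Set.univ := hB.mul_right _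
  have hinner (x : X) :
      HasSum (fun i => c i * g i x * ∫ y, g i y ∂σ) (∫ y, K x y ∂σ) := by
    have := hasSum_integral_of_dominated_convergence (μ := σ) (fun i _ => ‖c i‖ * B i ^ 2)
      (fun i => ((hg i).const_mul (c i * g i x)).aestronglyMeasurable)
      (fun i => ae_of_all _ fun y => by
        rw [sq, ← mul_assoc]
        exact norm_mul_le_of_le (norm_mul_le_of_le le_rfl (hgB i x)) (hgB i y))
      (ae_of_all _ fun _ => hB) (integrable_const _) (ae_of_all _ (hK x))
    simpa only [integral_const_mul] using this
  have := hasSum_integral_of_dominated_convergence (μ := μ)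
    (fun i _ => ‖c i‖ * B i ^ 2 * σ.real Set.univ)
    (fun i => (((hg i).const_mul (c i)).mul_const (∫ y, g i y ∂σ)).aestronglyMeasurable)
    (fun i => ae_of_all _ fun x => by
      rw [sq, ← mul_assoc, mul_assoc _ (B i)]
      exact norm_mul_le_of_le (norm_mul_le_of_le le_rfl (hgB i x))
        (norm_integral_le_of_norm_le_const (ae_of_all _ (hgB i))))
    (ae_of_all _ fun _ => hB') (integrable_const _) (ae_of_all _ hinner)
  simpa only [integral_mul_const, integral_const_mul] using this

theorem doubleIntegralSub_nonneg_of_hasSum_mul (μ ρ : Measure X) [IsFiniteMeasure μ]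
    [IsFiniteMeasure ρ] (hc : ∀ i, 0 ≤ c i) (hg : ∀ i, Measurable (g i))
    (hgB : ∀ i x, ‖g i x‖ ≤ B i) (hB : Summable fun i => ‖c i‖ * B i ^ 2)
    (hK : ∀ x y, HasSum (fun i => c i * g i x * g i y) (K x y)) :
    0 ≤ doubleIntegralSub μ ρ K := by
  have hsum (μ σ : Measure X) [IsFiniteMeasure μ] [IsFiniteMeasure σ] :=
    hasSum_integral_integral_of_hasSum_mul μ σ hg hgB hB hK
  refine (((hsum μ μ).sub (hsum μ ρ)).sub (hsum ρ μ)).add (hsum ρ ρ) |>.nonneg fun i => ?_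
  have hsq : c i * (∫ x, g i x ∂μ) * (∫ y, g i y ∂μ) - c i * (∫ x, g i x ∂μ) * (∫ y, g i y ∂ρ)
      - c i * (∫ x, g i x ∂ρ) * (∫ y, g i y ∂μ) + c i * (∫ x, g i x ∂ρ) * (∫ y, g i y ∂ρ)
      = c i * ((∫ x, g i x ∂μ) - ∫ x, g i x ∂ρ) ^ 2 := by ring
  rw [hsq]
  exact mul_nonneg (hc i) (sq_nonneg _)

end SumOfProducts

section ExpansionOfExpInner

variable {E : Type*} [NormedAddCommGroup E] [InnerProductSpace ℝ E] {ι : Type*} [Fintype ι]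

theorem summable_norm_inv_factorial_mul_pow_sq (R : ℝ) :
    Summable fun p : Σ k, Fin k → ι => ‖((p.1)! : ℝ)⁻¹‖ * (R ^ p.1) ^ 2 := by
  refine (summable_sigma_of_nonneg fun _ => by positivity).mpr ⟨fun _ => .of_finite, ?_⟩
  convert Real.summable_pow_div_factorial (Fintype.card ι * R ^ 2) using 2 with k
  simp only [tsum_fintype, Finset.sum_const, Finset.card_univ, Fintype.card_fun, Fintype.card_fin,
    nsmul_eq_mul, Nat.cast_pow, norm_inv, Real.norm_natCast]
  ring

/-- `∏ⱼ u_{αⱼ}` for `p = ⟨k, α⟩`, where `uᵢ = ⟪b i, u⟫` is the `i`-th coordinate of `u`. -/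
noncomputable def OrthonormalBasis.coordMonomial (b : OrthonormalBasis ι ℝ E)
    (p : Σ k, Fin k → ι) (u : E) : ℝ :=
  ∏ j, ⟪b (p.2 j), u⟫

namespace OrthonormalBasis

variable (b : OrthonormalBasis ι ℝ E)

theorem continuous_coordMonomial (p : Σ k, Fin k → ι) : Continuous (b.coordMonomial p) := by
  unfold coordMonomial
  fun_prop

theorem norm_coordMonomial_le (p : Σ k, Fin k → ι) (u : E) :
    ‖b.coordMonomial p u‖ ≤ ‖u‖ ^ p.1 := by
  rw [coordMonomial, norm_prod]
  calc ∏ j, ‖⟪b (p.2 j), u⟫‖ ≤ ∏ _j : Fin p.1, ‖u‖ :=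
        Finset.prod_le_prod (fun _ _ => norm_nonneg _) fun j _ =>
          (norm_inner_le_norm _ _).trans_eq (by rw [b.norm_eq_one, one_mul])
    _ = ‖u‖ ^ p.1 := by simp

theorem sum_coordMonomial_mul (k : ℕ) (u v : E) :
    ∑ α : Fin k → ι, b.coordMonomial ⟨k, α⟩ u * b.coordMonomial ⟨k, α⟩ v = ⟪u, v⟫ ^ k := by
  rw [← b.sum_inner_mul_inner u v, Fintype.sum_pow]
  refine Finset.sum_congr rfl fun α _ => ?_
  simp only [coordMonomial, ← Finset.prod_mul_distrib, real_inner_comm u]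

theorem hasSum_exp_inner (u v : E) :
    HasSum (fun p : Σ k, Fin k → ι =>
        ((p.1)! : ℝ)⁻¹ * b.coordMonomial p u * b.coordMonomial p v) (Real.exp ⟪u, v⟫) := by
  set R := max ‖u‖ ‖v‖
  have hsummable : Summable fun p : Σ k, Fin k → ι =>
      ((p.1)! : ℝ)⁻¹ * b.coordMonomial p u * b.coordMonomial p v := by
    refine (summable_norm_inv_factorial_mul_pow_sq R).of_norm_bounded fun p => ?_
    rw [sq, ← mul_assoc]
    refine norm_mul_le_of_le (norm_mul_le_of_le le_rfl ?_) ?_ <;>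
      exact (b.norm_coordMonomial_le p _).trans
        (pow_le_pow_left₀ (norm_nonneg _) (by simp [R]) _)
  refine HasSum.sigma_of_hasSum ?_ (fun k => hasSum_fintype _) hsummable
  simp_rw [mul_assoc, ← Finset.mul_sum, b.sum_coordMonomial_mul, inv_mul_eq_div,
    Real.exp_eq_exp_ℝ]
  exact NormedSpace.expSeries_div_hasSum_exp _

end OrthonormalBasis

end ExpansionOfExpInner

theorem doubleIntegralSub_exp_inner_nonneg {E : Type*} [NormedAddCommGroup E]
    [InnerProductSpace ℝ E] [FiniteDimensional ℝ E] [MeasurableSpace E] [BorelSpace E]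
    (μ ρ : Measure X) [IsFiniteMeasure μ] [IsFiniteMeasure ρ] {f : X → E} (hf : Measurable f)
    {R : ℝ} (hR : ∀ x, ‖f x‖ ≤ R) :
    0 ≤ doubleIntegralSub μ ρ fun x y => Real.exp ⟪f x, f y⟫ :=
  let b := stdOrthonormalBasis ℝ E
  doubleIntegralSub_nonneg_of_hasSum_mul μ ρ (fun _ => by positivity)
    (fun p => (b.continuous_coordMonomial p).measurable.comp hf)
    (fun p x => (b.norm_coordMonomial_le p _).trans (pow_le_pow_left₀ (norm_nonneg _) (hR x) _))
    (summable_norm_inv_factorial_mul_pow_sq R)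
    (fun x y => b.hasSum_exp_inner (f x) (f y))

open scoped ComplexOrder MatrixOrder in
theorem Matrix.PosSemidef.exists_eq_star_mul_self {𝕜 n : Type*} [RCLike 𝕜] [Fintype n]
    [DecidableEq n] {D : Matrix n n 𝕜} (hD : D.PosSemidef) : ∃ B, D = star B * B :=
  CStarAlgebra.nonneg_iff_eq_star_mul_self.mp hD.nonneg

theorem Matrix.inner_toEuclideanLin_star_mul_self {𝕜 n : Type*} [RCLike 𝕜] [Fintype n]
    [DecidableEq n] (B : Matrix n n 𝕜) (x y : EuclideanSpace 𝕜 n) :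
    inner 𝕜 x (toEuclideanLin (star B * B) y) =
      inner 𝕜 (toEuclideanLin B x) (toEuclideanLin B y) := by
  rw [toLpLin_mul_same, LinearMap.comp_apply, star_eq_conjTranspose,
    toEuclideanLin_conjTranspose_eq_adjoint, LinearMap.adjoint_inner_right]

theorem stmt8 {n : ℕ} (D : Matrix (Fin n) (Fin n) ℝ) (hD : D.PosSemidef)
    (ν : SignedMeasure (Metric.sphere (0 : EuclideanSpace ℝ (Fin n)) 1)) :
    0 ≤
      (∫ x, ∫ y, Real.exp ⟪(x : EuclideanSpace ℝ (Fin n)),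
          Matrix.toEuclideanLin D (y : EuclideanSpace ℝ (Fin n))⟫
          ∂ν.toJordanDecomposition.posPart ∂ν.toJordanDecomposition.posPart)
      - (∫ x, ∫ y, Real.exp ⟪(x : EuclideanSpace ℝ (Fin n)),
          Matrix.toEuclideanLin D (y : EuclideanSpace ℝ (Fin n))⟫
          ∂ν.toJordanDecomposition.negPart ∂ν.toJordanDecomposition.posPart)
      - (∫ x, ∫ y, Real.exp ⟪(x : EuclideanSpace ℝ (Fin n)),
          Matrix.toEuclideanLin D (y : EuclideanSpace ℝ (Fin n))⟫
          ∂ν.toJordanDecomposition.posPart ∂ν.toJordanDecomposition.negPart)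
      + (∫ x, ∫ y, Real.exp ⟪(x : EuclideanSpace ℝ (Fin n)),
          Matrix.toEuclideanLin D (y : EuclideanSpace ℝ (Fin n))⟫
          ∂ν.toJordanDecomposition.negPart ∂ν.toJordanDecomposition.negPart) := by
  obtain ⟨B, rfl⟩ := hD.exists_eq_star_mul_self
  let A := LinearMap.toContinuousLinearMap (Matrix.toEuclideanLin B)
  have hA (x : Metric.sphere (0 : EuclideanSpace ℝ (Fin n)) 1) : ‖A x‖ ≤ ‖A‖ := by
    simpa using A.le_opNorm x
  simp_rw [Matrix.inner_toEuclideanLin_star_mul_self]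
  exact doubleIntegralSub_exp_inner_nonneg _ _
    (A.continuous.measurable.comp measurable_subtype_coe) hA
end

section
/- Let D be symmetric positive semi-definite, z a unit eigenvector of D, and H_z(x) = x − 2⟪x,z⟫z the reflection across the hyperplane orthogonal to z. For any probability measure μ on the unit sphere, set μ̃ = (1/2)(μ + (H_z)_# μ). Then E(μ̃) ≤ E(μ), where E(μ) = ∬ exp(⟪x, D y⟫) dμ(x) dμ(y). -/
/-! `(μ, ν) ↦ ∬ exp ⟪x, D y⟫ dμ(x) dν(y)` is a positive semidefinite bilinear form on measures of
bounded support. Indeed, write `D = BᵀB`, so that `⟪x, D y⟫ = ⟪Bx, By⟫`, and expand `exp` in its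
power series: the `k`-th term `∬ ⟪Bx, By⟫ᵏ` is `∑_G m_G(μ) m_G(ν)` over multi-indices
`G : Fin k → Fin n`, where `m_G(μ) = ∫ ∏ⱼ (Bx)_{G j} dμ(x)`. Hence the energy is midpoint convex.
Since `z` is an eigenvector of the symmetric `D`, the reflection `H_z` preserves `⟪x, D y⟫`, so
`E((H_z)_# μ) = E(μ)`, and convexity gives `E(μ̃) ≤ (E(μ) + E((H_z)_# μ)) / 2 = E(μ)`. -/

open MeasureTheory RealInnerProductSpace ENNReal

theorem hasSum_integral_exp_div_factorial {α : Type*} [MeasurableSpace α] (Θ : Measure α) [IsFiniteMeasure Θ] {c : α → ℝ}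
    (hc : AEStronglyMeasurable c Θ) {R : ℝ} (hR : ∀ᵐ a ∂Θ, |c a| ≤ R) :
    HasSum (fun k : ℕ => (∫ a, c a ^ k ∂Θ) / k.factorial) (∫ a, Real.exp (c a) ∂Θ) := by
  simp_rw [← integral_div]
  refine hasSum_integral_of_dominated_convergence (fun k _ => R ^ k / k.factorial)
    (fun k => by fun_prop) (fun k => ?_)
    (ae_of_all _ fun _ => Real.summable_pow_div_factorial R) (integrable_const _)
    (ae_of_all _ fun a => ?_)
  · filter_upwards [hR] with a ha
    rw [norm_div, norm_pow, Real.norm_eq_abs, RCLike.norm_natCast]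
    gcongr
  · simpa [Real.exp_eq_exp_ℝ] using NormedSpace.expSeries_div_hasSum_exp (c a)

section FeatureKernel

variable {X ι : Type*} [MeasurableSpace X] [Fintype ι] {F : X → EuclideanSpace ℝ ι}

lemma inner_pow_eq_sum_prod (a b : EuclideanSpace ℝ ι) (k : ℕ) :
    ⟪a, b⟫ ^ k = ∑ G : Fin k → ι, (∏ j, a (G j)) * ∏ j, b (G j) := by
  simp only [PiLp.inner_apply, RCLike.inner_apply, conj_trivial, Fintype.sum_pow,
    ← Finset.prod_mul_distrib, mul_comm]

lemma integrable_prod_apply (hF : Measurable F) {μ : Measure X} [IsFiniteMeasure μ] {r : ℝ}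
    (hμ : ∀ᵐ x ∂μ, ‖F x‖ ≤ r) {k : ℕ} (G : Fin k → ι) :
    Integrable (fun x => ∏ j, F x (G j)) μ := by
  refine Integrable.of_bound (by fun_prop) (r ^ k) ?_
  filter_upwards [hμ] with x hx
  calc ‖∏ j, F x (G j)‖ = ∏ j, ‖F x (G j)‖ := norm_prod _ _
    _ ≤ ∏ _j : Fin k, r :=
      Finset.prod_le_prod (fun _ _ => norm_nonneg _) fun j _ => (PiLp.norm_apply_le _ _).trans hx
    _ = r ^ k := by simp

lemma ae_abs_inner_le_prod {μ ν : Measure X} [SFinite ν] {r : ℝ} (hμ : ∀ᵐ x ∂μ, ‖F x‖ ≤ r)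
    (hν : ∀ᵐ x ∂ν, ‖F x‖ ≤ r) : ∀ᵐ p ∂(μ.prod ν), |⟪F p.1, F p.2⟫| ≤ r * r := by
  filter_upwards [Measure.quasiMeasurePreserving_fst.ae hμ,
    Measure.quasiMeasurePreserving_snd.ae hν] with p h₁ h₂
  exact (abs_real_inner_le_norm _ _).trans
    (mul_le_mul h₁ h₂ (norm_nonneg _) ((norm_nonneg _).trans h₁))

variable {μ ν : Measure X} [IsFiniteMeasure μ] [IsFiniteMeasure ν] {r : ℝ}

lemma integral_inner_pow_prod (hF : Measurable F) (hμ : ∀ᵐ x ∂μ, ‖F x‖ ≤ r)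
    (hν : ∀ᵐ x ∂ν, ‖F x‖ ≤ r) (k : ℕ) :
    ∫ p, ⟪F p.1, F p.2⟫ ^ k ∂(μ.prod ν) =
      ∑ G : Fin k → ι, (∫ x, ∏ j, F x (G j) ∂μ) * ∫ y, ∏ j, F y (G j) ∂ν := by
  simp_rw [inner_pow_eq_sum_prod]
  rw [integral_finsetSum _ fun G _ =>
    (integrable_prod_apply hF hμ G).mul_prod (integrable_prod_apply hF hν G)]
  exact Finset.sum_congr rfl fun G _ =>
    integral_prod_mul (fun x => ∏ j, F x (G j)) (fun y => ∏ j, F y (G j))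

lemma integral_inner_pow_cross_le (hF : Measurable F) (hμ : ∀ᵐ x ∂μ, ‖F x‖ ≤ r)
    (hν : ∀ᵐ x ∂ν, ‖F x‖ ≤ r) (k : ℕ) :
    ∫ p, ⟪F p.1, F p.2⟫ ^ k ∂(μ.prod ν) + ∫ p, ⟪F p.1, F p.2⟫ ^ k ∂(ν.prod μ) ≤
      ∫ p, ⟪F p.1, F p.2⟫ ^ k ∂(μ.prod μ) + ∫ p, ⟪F p.1, F p.2⟫ ^ k ∂(ν.prod ν) := by
  simp only [integral_inner_pow_prod hF hμ hν, integral_inner_pow_prod hF hν hμ,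
    integral_inner_pow_prod hF hμ hμ, integral_inner_pow_prod hF hν hν, ← Finset.sum_add_distrib]
  -- termwise `2ab ≤ a² + b²` for the moments `a`, `b` of `μ`, `ν` indexed by `G`
  refine Finset.sum_le_sum fun G _ => ?_
  nlinarith [sq_nonneg ((∫ x, ∏ j, F x (G j) ∂μ) - ∫ x, ∏ j, F x (G j) ∂ν)]

lemma integrable_exp_inner_prod (hF : Measurable F) (hμ : ∀ᵐ x ∂μ, ‖F x‖ ≤ r)
    (hν : ∀ᵐ x ∂ν, ‖F x‖ ≤ r) : Integrable (fun p => Real.exp ⟪F p.1, F p.2⟫) (μ.prod ν) := by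
  refine Integrable.of_bound (by fun_prop) (Real.exp (r * r)) ?_
  filter_upwards [ae_abs_inner_le_prod hμ hν] with p hp
  rw [Real.norm_eq_abs, Real.abs_exp]
  exact Real.exp_le_exp.2 ((le_abs_self _).trans hp)

lemma hasSum_integral_exp_inner_prod (hF : Measurable F) (hμ : ∀ᵐ x ∂μ, ‖F x‖ ≤ r)
    (hν : ∀ᵐ x ∂ν, ‖F x‖ ≤ r) :
    HasSum (fun k : ℕ => (∫ p, ⟪F p.1, F p.2⟫ ^ k ∂(μ.prod ν)) / k.factorial)
      (∫ p, Real.exp ⟪F p.1, F p.2⟫ ∂(μ.prod ν)) :=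
  hasSum_integral_exp_div_factorial _ (by fun_prop) (ae_abs_inner_le_prod hμ hν)

lemma integral_exp_inner_cross_le (hF : Measurable F) (hμ : ∀ᵐ x ∂μ, ‖F x‖ ≤ r)
    (hν : ∀ᵐ x ∂ν, ‖F x‖ ≤ r) :
    ∫ p, Real.exp ⟪F p.1, F p.2⟫ ∂(μ.prod ν) + ∫ p, Real.exp ⟪F p.1, F p.2⟫ ∂(ν.prod μ) ≤
      ∫ p, Real.exp ⟪F p.1, F p.2⟫ ∂(μ.prod μ) + ∫ p, Real.exp ⟪F p.1, F p.2⟫ ∂(ν.prod ν) := by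
  refine hasSum_le (fun k => ?_)
    ((hasSum_integral_exp_inner_prod hF hμ hν).add (hasSum_integral_exp_inner_prod hF hν hμ))
    ((hasSum_integral_exp_inner_prod hF hμ hμ).add (hasSum_integral_exp_inner_prod hF hν hν))
  rw [← add_div, ← add_div]
  exact div_le_div_of_nonneg_right (integral_inner_pow_cross_le hF hμ hν k) (by positivity)

theorem integral_exp_inner_midpoint_le (hF : Measurable F) (hμ : ∀ᵐ x ∂μ, ‖F x‖ ≤ r)
    (hν : ∀ᵐ x ∂ν, ‖F x‖ ≤ r) :
    ∫ p, Real.exp ⟪F p.1, F p.2⟫ ∂(((2 : ℝ≥0∞)⁻¹ • (μ + ν)).prod ((2 : ℝ≥0∞)⁻¹ • (μ + ν))) ≤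
      2⁻¹ * (∫ p, Real.exp ⟪F p.1, F p.2⟫ ∂(μ.prod μ) +
        ∫ p, Real.exp ⟪F p.1, F p.2⟫ ∂(ν.prod ν)) := by
  rw [Measure.prod_smul_left, Measure.prod_smul_right, Measure.add_prod, Measure.prod_add,
    Measure.prod_add, integral_smul_measure, integral_smul_measure,
    integral_add_measure ((integrable_exp_inner_prod hF hμ hμ).add_measure
      (integrable_exp_inner_prod hF hμ hν))
      ((integrable_exp_inner_prod hF hν hμ).add_measure (integrable_exp_inner_prod hF hν hν)),
    integral_add_measure (integrable_exp_inner_prod hF hμ hμ) (integrable_exp_inner_prod hF hμ hν),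
    integral_add_measure (integrable_exp_inner_prod hF hν hμ) (integrable_exp_inner_prod hF hν hν)]
  have := integral_exp_inner_cross_le hF hμ hν
  simp only [ENNReal.toReal_inv, ENNReal.toReal_ofNat, smul_eq_mul]
  linarith

end FeatureKernel

open scoped MatrixOrder in
lemma Matrix.PosSemidef.exists_inner_toEuclideanLin_eq {m : Type*} [Fintype m] [DecidableEq m]
    {D : Matrix m m ℝ} (hD : D.PosSemidef) :
    ∃ L : EuclideanSpace ℝ m →L[ℝ] EuclideanSpace ℝ m,
      ∀ x y, ⟪x, Matrix.toEuclideanLin D y⟫ = ⟪L x, L y⟫ := by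
  obtain ⟨B, rfl⟩ := CStarAlgebra.nonneg_iff_eq_star_mul_self.mp hD.nonneg
  refine ⟨(Matrix.toEuclideanLin B).toContinuousLinearMap, fun x y => ?_⟩
  rw [LinearMap.coe_toContinuousLinearMap', ← LinearMap.adjoint_inner_right,
    ← Matrix.toEuclideanLin_conjTranspose_eq_adjoint]
  simp [Matrix.star_eq_conjTranspose, Matrix.toLpLin_apply, Matrix.mulVec_mulVec]

section Energy

variable {n : ℕ} {D : Matrix (Fin n) (Fin n) ℝ}

lemma energy_eq_integral_prod {F : EuclideanSpace ℝ (Fin n) → EuclideanSpace ℝ (Fin n)}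
    (hF : Measurable F) (hDF : ∀ x y, ⟪x, Matrix.toEuclideanLin D y⟫ = ⟪F x, F y⟫)
    {μ : Measure (EuclideanSpace ℝ (Fin n))} [IsFiniteMeasure μ] {r : ℝ}
    (hμ : ∀ᵐ x ∂μ, ‖F x‖ ≤ r) :
    energy D μ = ∫ p, Real.exp ⟪F p.1, F p.2⟫ ∂(μ.prod μ) := by
  simp_rw [energy, hDF]
  exact (integral_prod _ (integrable_exp_inner_prod hF hμ hμ)).symm

theorem energy_midpoint_le (hD : D.PosSemidef) {μ ν : Measure (EuclideanSpace ℝ (Fin n))}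
    [IsFiniteMeasure μ] [IsFiniteMeasure ν] {r : ℝ} (hμ : ∀ᵐ x ∂μ, ‖x‖ ≤ r)
    (hν : ∀ᵐ x ∂ν, ‖x‖ ≤ r) :
    energy D ((2 : ℝ≥0∞)⁻¹ • (μ + ν)) ≤ 2⁻¹ * (energy D μ + energy D ν) := by
  obtain ⟨L, hL⟩ := hD.exists_inner_toEuclideanLin_eq
  have hL_le {m : Measure (EuclideanSpace ℝ (Fin n))} (hm : ∀ᵐ x ∂m, ‖x‖ ≤ r) :
      ∀ᵐ x ∂m, ‖L x‖ ≤ ‖L‖ * r :=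
    hm.mono fun x hx => (L.le_opNorm x).trans (by gcongr)
  have hρ : ∀ᵐ x ∂((2 : ℝ≥0∞)⁻¹ • (μ + ν)), ‖x‖ ≤ r :=
    Measure.ae_smul_measure (ae_add_measure_iff.2 ⟨hμ, hν⟩) _
  have := (μ + ν).smul_finite (c := 2⁻¹) (by simp)
  rw [energy_eq_integral_prod L.measurable hL (hL_le hρ),
    energy_eq_integral_prod L.measurable hL (hL_le hμ),
    energy_eq_integral_prod L.measurable hL (hL_le hν)]
  exact integral_exp_inner_midpoint_le L.measurable (hL_le hμ) (hL_le hν)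

lemma energy_map_of_inner_eq {H : EuclideanSpace ℝ (Fin n) → EuclideanSpace ℝ (Fin n)}
    (hH : Measurable H)
    (hDH : ∀ x y, ⟪H x, Matrix.toEuclideanLin D (H y)⟫ = ⟪x, Matrix.toEuclideanLin D y⟫)
    (μ : Measure (EuclideanSpace ℝ (Fin n))) [SFinite μ] :
    energy D (μ.map H) = energy D μ := by
  have := (Matrix.toEuclideanLin D).continuous_of_finiteDimensional
  have hc : Continuous fun p : EuclideanSpace ℝ (Fin n) × EuclideanSpace ℝ (Fin n) =>
      Real.exp ⟪p.1, Matrix.toEuclideanLin D p.2⟫ := by fun_prop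
  rw [energy, integral_map hH.aemeasurable
    hc.stronglyMeasurable.integral_prod_right'.aestronglyMeasurable]
  refine integral_congr_ae (ae_of_all _ fun x => ?_)
  dsimp only
  rw [integral_map (f := fun y => Real.exp ⟪H x, Matrix.toEuclideanLin D y⟫) hH.aemeasurable
    (by fun_prop)]
  simp_rw [hDH]

end Energy

lemma reflection_orthogonalComplement_singleton_apply_of_norm_eq_one {E : Type*}
    [NormedAddCommGroup E] [InnerProductSpace ℝ E] {z : E} (hz : ‖z‖ = 1) (x : E) :
    (ℝ ∙ z)ᗮ.reflection x = x - (2 * ⟪x, z⟫) • z := by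
  rw [Submodule.reflection_orthogonal_apply, Submodule.reflection_singleton_apply, hz,
    real_inner_comm, RCLike.ofReal_one, one_pow, div_one]
  module

lemma Matrix.IsHermitian.inner_toEuclideanLin_reflection {m : Type*} [Fintype m] [DecidableEq m]
    {D : Matrix m m ℝ} (hD : D.IsHermitian) {z : EuclideanSpace ℝ m} (hz : ‖z‖ = 1) {lam : ℝ}
    (hzD : Matrix.toEuclideanLin D z = lam • z) (x y : EuclideanSpace ℝ m) :
    ⟪(ℝ ∙ z)ᗮ.reflection x, Matrix.toEuclideanLin D ((ℝ ∙ z)ᗮ.reflection y)⟫ =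
      ⟪x, Matrix.toEuclideanLin D y⟫ := by
  have hzz : ⟪z, z⟫ = 1 := by rw [real_inner_self_eq_norm_sq, hz, one_pow]
  have hzDy : ⟪z, Matrix.toEuclideanLin D y⟫ = lam * ⟪y, z⟫ := by
    rw [← Matrix.isSymmetric_toEuclideanLin_iff.2 hD, hzD, real_inner_smul_left, real_inner_comm]
  simp only [reflection_orthogonalComplement_singleton_apply_of_norm_eq_one hz, map_sub,
    map_smul, hzD, inner_sub_left, inner_sub_right, real_inner_smul_left, real_inner_smul_right,
    hzDy, hzz]
  ring

theorem stmt9 {n : ℕ} (D : Matrix (Fin n) (Fin n) ℝ) (hD : D.PosSemidef)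
    (z : EuclideanSpace ℝ (Fin n)) (hz : ‖z‖ = 1)
    (lam : ℝ) (hzeig : Matrix.toEuclideanLin D z = lam • z)
    (μ : Measure (EuclideanSpace ℝ (Fin n))) [IsProbabilityMeasure μ]
    (hμ : μ (Metric.sphere (0 : EuclideanSpace ℝ (Fin n)) 1) = 1)
    (H : EuclideanSpace ℝ (Fin n) → EuclideanSpace ℝ (Fin n))
    (hH : ∀ x, H x = x - (2 * ⟪x, z⟫) • z) :
    energy D ((2 : ℝ≥0∞)⁻¹ • (μ + Measure.map H μ)) ≤ energy D μ := by
  obtain rfl : H = (ℝ ∙ z)ᗮ.reflection :=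
    funext fun x => (hH x).trans
      (reflection_orthogonalComplement_singleton_apply_of_norm_eq_one hz x).symm
  have hμ₁ : ∀ᵐ x ∂μ, ‖x‖ ≤ 1 := by
    have : ∀ᵐ x ∂μ, x ∈ Metric.sphere 0 1 :=
      (ae_mem_iff_measure_eq Metric.isClosed_sphere.nullMeasurableSet).2 (by simp [hμ])
    exact this.mono fun x hx => (mem_sphere_zero_iff_norm.1 hx).le
  have hν₁ : ∀ᵐ x ∂(μ.map (ℝ ∙ z)ᗮ.reflection), ‖x‖ ≤ 1 :=
    (ae_map_iff (LinearIsometryEquiv.continuous _).aemeasurable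
      (measurableSet_le measurable_norm measurable_const)).2 (by simpa using hμ₁)
  calc energy D ((2 : ℝ≥0∞)⁻¹ • (μ + μ.map (ℝ ∙ z)ᗮ.reflection))
      ≤ 2⁻¹ * (energy D μ + energy D (μ.map (ℝ ∙ z)ᗮ.reflection)) :=
        energy_midpoint_le hD hμ₁ hν₁
    _ = energy D μ := by
      rw [energy_map_of_inner_eq (LinearIsometryEquiv.continuous _).measurable
        (hD.isHermitian.inner_toEuclideanLin_reflection hz hzeig)]
      ring
end

section
/- Let D be a symmetric negative semi-definite matrix and μ a probability measure on the unit sphere. Define the antisymmetrization μ̃ by dμ̃(x) = (1/2)(dμ(x) + dμ(−x)), i.e. μ̃ = (1/2)(μ + N_# μ) with N(x) = −x. Then E(μ̃) ≥ E(μ), where E(μ) = ∬ exp(⟪x, D y⟫) dμ(x) dμ(y). -/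
open MeasureTheory RealInnerProductSpace ENNReal

/-!
The kernel `exp ⟪x, D y⟫` is invariant under `(x, y) ↦ (-x, -y)` and becomes `exp ⟪x, -D y⟫`
under either of `x ↦ -x`, `y ↦ -y`, so expanding the product of `μ̃ = (μ + N_# μ) / 2` with
itself gives `E_D(μ̃) = (E_D(μ) + E_{-D}(μ)) / 2`. It remains to see
`E_D(μ) ≤ E_{-D}(μ)`. Write `-D = BᴴB`, so that `k(x, y) = ⟪x, -D y⟫ = ⟪B x, B y⟫`. Expanding
`k ^ m` in coordinates, every moment `∬ k ^ m dμ dμ` is a sum of squares `(∫ ∏ⱼ (B x)_{p j} dμ)²`,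
hence nonnegative; the power series of `sinh` has only odd powers with positive coefficients, so
`∬ (exp k - exp (-k)) dμ dμ = 2 ∬ sinh k dμ dμ ≥ 0`.
-/

open scoped Nat

open scoped ComplexOrder MatrixOrder Matrix.Norms.L2Operator in
theorem Matrix.PosSemidef.exists_inner_toEuclideanLin_eq_s12 {𝕜 ι : Type*} [RCLike 𝕜] [Fintype ι]
    [DecidableEq ι] {A : Matrix ι ι 𝕜} (hA : A.PosSemidef) :
    ∃ B : Matrix ι ι 𝕜, ∀ x y : EuclideanSpace 𝕜 ι,
      inner 𝕜 x (A.toEuclideanLin y) = inner 𝕜 (B.toEuclideanLin x) (B.toEuclideanLin y) := by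
  obtain ⟨B, rfl⟩ := CStarAlgebra.nonneg_iff_eq_star_mul_self.mp hA.nonneg
  refine ⟨B, fun x y => ?_⟩
  rw [Matrix.toLpLin_mul_same, LinearMap.comp_apply, Matrix.star_eq_conjTranspose,
    Matrix.toEuclideanLin_conjTranspose_eq_adjoint, LinearMap.adjoint_inner_right]

theorem Finset.sum_mul_pow_eq_sum_prod_mul_prod {R ι : Type*} [CommSemiring R] [Fintype ι]
    (a b : ι → R) (m : ℕ) :
    (∑ i, a i * b i) ^ m = ∑ p : Fin m → ι, (∏ j, a (p j)) * ∏ j, b (p j) := by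
  rw [Finset.sum_pow', Fintype.piFinset_univ]
  simp only [Finset.prod_mul_distrib]

theorem MeasureTheory.ae_mem_prod_of_ae_mem {X Y : Type*} [MeasurableSpace X]
    [MeasurableSpace Y] {μ : Measure X} {ν : Measure Y} [SFinite ν] {s : Set X} {t : Set Y}
    (hs : ∀ᵐ x ∂μ, x ∈ s) (ht : ∀ᵐ y ∂ν, y ∈ t) : ∀ᵐ z ∂(μ.prod ν), z ∈ s ×ˢ t :=
  (Measure.quasiMeasurePreserving_fst.ae hs).and (Measure.quasiMeasurePreserving_snd.ae ht)

theorem MeasureTheory.integral_prod_self_add_map {X : Type*} [MeasurableSpace X]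
    {μ : Measure X} [IsFiniteMeasure μ] {N : X → X} (hN : Measurable N) {F : X × X → ℝ}
    (hF : Integrable F ((μ + μ.map N).prod (μ + μ.map N)))
    (hF_map_map : ∀ x y, F (N x, N y) = F (x, y)) (hF_map_left : ∀ x y, F (N x, y) = F (x, N y)) :
    ∫ z, F z ∂((μ + μ.map N).prod (μ + μ.map N)) =
      2 * (∫ z, F z ∂(μ.prod μ) + ∫ z, F (z.1, N z.2) ∂(μ.prod μ)) := by
  have h_map : ∀ {a b : X → X}, Measurable a → Measurable b →
      Integrable F ((μ.map a).prod (μ.map b)) →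
      ∫ z, F z ∂((μ.map a).prod (μ.map b)) = ∫ z, F (a z.1, b z.2) ∂(μ.prod μ) := by
    intro a b ha hb hab
    rw [Measure.map_prod_map _ _ ha hb] at hab ⊢
    exact integral_map (ha.prodMap hb).aemeasurable hab.aestronglyMeasurable
  have h_right := h_map measurable_id hN
  have h_left := h_map hN measurable_id
  rw [Measure.map_id] at h_right h_left
  rw [Measure.prod_add, Measure.add_prod, Measure.add_prod] at hF ⊢
  simp only [integrable_add_measure] at hF
  obtain ⟨⟨h11, h21⟩, h12, h22⟩ := hF
  rw [integral_add_measure (h11.add_measure h21) (h12.add_measure h22),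
    integral_add_measure h11 h21, integral_add_measure h12 h22,
    h_right h12, h_left h21, h_map hN hN h22]
  simp only [id, hF_map_map, hF_map_left]
  ring

section Compact

variable {X : Type*} [TopologicalSpace X] [T2Space X] [MeasurableSpace X]
  [OpensMeasurableSpace X] {μ : Measure X} [IsFiniteMeasure μ] {K : Set X}

theorem Continuous.integrable_of_ae_mem_compact {E : Type*} [NormedAddCommGroup E] {f : X → E}
    (hf : Continuous f) (hK : IsCompact K) (hμK : ∀ᵐ x ∂μ, x ∈ K) : Integrable f μ := by
  rw [← Measure.restrict_eq_self_of_ae_mem hμK]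
  exact hf.continuousOn.integrableOn_compact hK

theorem integral_inner_pow_nonneg {ι : Type*} [Fintype ι] (hK : IsCompact K)
    (hμK : ∀ᵐ x ∂μ, x ∈ K) {u : X → EuclideanSpace ℝ ι} (hu : Continuous u) (m : ℕ) :
    0 ≤ ∫ z, ⟪u z.1, u z.2⟫ ^ m ∂(μ.prod μ) := by
  have hint : ∀ p : Fin m → ι, Integrable (fun x => ∏ j, u x (p j)) μ := fun p =>
    (continuous_finsetProd _ fun j _ => (EuclideanSpace.proj (p j)).continuous.comp hu
      ).integrable_of_ae_mem_compact hK hμK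
  simp only [PiLp.inner_apply, Real.inner_apply, Finset.sum_mul_pow_eq_sum_prod_mul_prod]
  rw [integral_finsetSum _ fun p _ => (hint p).mul_prod (hint p)]
  refine Finset.sum_nonneg fun p _ => ?_
  rw [integral_prod_mul (fun x => ∏ j, u x (p j)) (fun x => ∏ j, u x (p j))]
  exact mul_self_nonneg _

theorem integral_sinh_nonneg_of_integral_pow_nonneg (hK : IsCompact K) (hμK : ∀ᵐ x ∂μ, x ∈ K)
    {s : X → ℝ} (hs : Continuous s) (hmom : ∀ m : ℕ, 0 ≤ ∫ x, s x ^ m ∂μ) :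
    0 ≤ ∫ x, Real.sinh (s x) ∂μ := by
  obtain ⟨C, hC⟩ := hK.exists_bound_of_continuousOn hs.continuousOn
  set F : ℕ → X → ℝ := fun k x => s x ^ (2 * k + 1) / (2 * k + 1)!
  have hF_int : ∀ k, Integrable (F k) μ := fun k =>
    ((hs.pow _).div_const _).integrable_of_ae_mem_compact hK hμK
  have hF_le : ∀ k, ∫ x, ‖F k x‖ ∂μ ≤ C ^ (2 * k + 1) / (2 * k + 1)! * μ.real Set.univ := by
    refine fun k => (Real.le_norm_self _).trans (norm_integral_le_of_norm_le_const ?_)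
    filter_upwards [hμK] with x hx
    rw [norm_norm, norm_div, norm_pow, RCLike.norm_natCast]
    gcongr
    exact hC x hx
  have hF_sum : Summable fun k => ∫ x, ‖F k x‖ ∂μ :=
    .of_nonneg_of_le (fun k => integral_nonneg fun x => norm_nonneg _) hF_le
      (((Real.summable_pow_div_factorial C).comp_injective
        fun a b h => by simpa using h).mul_right _)
  have hsinh : (fun x => Real.sinh (s x)) = fun x => ∑' k, F k x :=
    funext fun x => (Real.hasSum_sinh _).tsum_eq.symm
  rw [hsinh]
  refine (hasSum_integral_of_summable_integral_norm hF_int hF_sum).nonneg fun k => ?_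
  rw [integral_div]
  exact div_nonneg (hmom _) (by positivity)

theorem integral_exp_neg_le_integral_exp_of_integral_pow_nonneg (hK : IsCompact K)
    (hμK : ∀ᵐ x ∂μ, x ∈ K) {s : X → ℝ} (hs : Continuous s)
    (hmom : ∀ m : ℕ, 0 ≤ ∫ x, s x ^ m ∂μ) :
    ∫ x, Real.exp (-s x) ∂μ ≤ ∫ x, Real.exp (s x) ∂μ := by
  have hsinh := integral_sinh_nonneg_of_integral_pow_nonneg hK hμK hs hmom
  have hexp : Integrable (fun x => Real.exp (s x)) μ :=
    (Real.continuous_exp.comp hs).integrable_of_ae_mem_compact hK hμK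
  have hexp_neg : Integrable (fun x => Real.exp (-s x)) μ :=
    (Real.continuous_exp.comp hs.neg).integrable_of_ae_mem_compact hK hμK
  simp only [Real.sinh_eq] at hsinh
  rw [integral_div, integral_sub hexp hexp_neg] at hsinh
  linarith

end Compact

section Energy

variable {n : ℕ} {μ : Measure (EuclideanSpace ℝ (Fin n))} [IsFiniteMeasure μ] {R : ℝ}

theorem continuous_exp_inner_toEuclideanLin (D : Matrix (Fin n) (Fin n) ℝ) :
    Continuous fun z : EuclideanSpace ℝ (Fin n) × EuclideanSpace ℝ (Fin n) =>
      Real.exp ⟪z.1, D.toEuclideanLin z.2⟫ :=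
  Real.continuous_exp.comp <| continuous_fst.inner <|
    (LinearMap.continuous_of_finiteDimensional _).comp continuous_snd

theorem energy_eq_integral_prod_s12 (D : Matrix (Fin n) (Fin n) ℝ)
    (hμ : ∀ᵐ x ∂μ, x ∈ Metric.closedBall 0 R) :
    energy D μ = ∫ z, Real.exp ⟪z.1, D.toEuclideanLin z.2⟫ ∂(μ.prod μ) :=
  (integral_prod _ ((continuous_exp_inner_toEuclideanLin D).integrable_of_ae_mem_compact
    ((isCompact_closedBall 0 R).prod (isCompact_closedBall 0 R))
    (ae_mem_prod_of_ae_mem hμ hμ))).symm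

theorem energy_neg_le_energy {D : Matrix (Fin n) (Fin n) ℝ} (hD : D.PosSemidef)
    (hμ : ∀ᵐ x ∂μ, x ∈ Metric.closedBall 0 R) : energy (-D) μ ≤ energy D μ := by
  obtain ⟨B, hB⟩ := hD.exists_inner_toEuclideanLin_eq_s12
  have hK := isCompact_closedBall (0 : EuclideanSpace ℝ (Fin n)) R
  rw [energy_eq_integral_prod_s12 _ hμ, energy_eq_integral_prod_s12 _ hμ]
  simp only [map_neg, LinearMap.neg_apply, inner_neg_right]
  refine integral_exp_neg_le_integral_exp_of_integral_pow_nonneg (hK.prod hK)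
    (ae_mem_prod_of_ae_mem hμ hμ) ?_ fun m => ?_
  · exact continuous_fst.inner ((LinearMap.continuous_of_finiteDimensional _).comp continuous_snd)
  · simp only [hB]
    exact integral_inner_pow_nonneg hK hμ (LinearMap.continuous_of_finiteDimensional _) m

theorem energy_smul_add_map_neg (D : Matrix (Fin n) (Fin n) ℝ)
    (hμ : ∀ᵐ x ∂μ, x ∈ Metric.closedBall 0 R) :
    energy D ((2 : ℝ≥0∞)⁻¹ • (μ + μ.map (fun x => -x))) = (energy D μ + energy (-D) μ) / 2 := by
  set ρ := μ + μ.map (fun x : EuclideanSpace ℝ (Fin n) => -x)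
  have hρ : ∀ᵐ x ∂ρ, x ∈ Metric.closedBall 0 R := by
    refine ae_add_measure_iff.2 ⟨hμ, (ae_map_iff measurable_neg.aemeasurable
      Metric.isClosed_closedBall.measurableSet).2 ?_⟩
    simpa using hμ
  have : IsFiniteMeasure ((2 : ℝ≥0∞)⁻¹ • ρ) := Measure.smul_finite ρ (by simp)
  have hK := isCompact_closedBall (0 : EuclideanSpace ℝ (Fin n)) R
  have hρ_int := (continuous_exp_inner_toEuclideanLin D).integrable_of_ae_mem_compact
    (hK.prod hK) (ae_mem_prod_of_ae_mem hρ hρ)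
  rw [energy_eq_integral_prod_s12 D (Measure.ae_smul_measure hρ _), Measure.prod_smul_left,
    Measure.prod_smul_right, integral_smul_measure, integral_smul_measure,
    integral_prod_self_add_map measurable_neg hρ_int (by simp) (by simp),
    energy_eq_integral_prod_s12 D hμ, energy_eq_integral_prod_s12 (-D) hμ]
  simp only [map_neg, LinearMap.neg_apply, ENNReal.toReal_inv, ENNReal.toReal_ofNat, smul_eq_mul]
  ring

end Energy

theorem stmt12 {n : ℕ} (D : Matrix (Fin n) (Fin n) ℝ) (hD : (-D).PosSemidef)
    (μ : Measure (EuclideanSpace ℝ (Fin n))) [IsProbabilityMeasure μ]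
    (hμ : μ (Metric.sphere (0 : EuclideanSpace ℝ (Fin n)) 1) = 1) :
    energy D μ ≤
      energy D ((2 : ℝ≥0∞)⁻¹ •
        (μ + Measure.map (fun x : EuclideanSpace ℝ (Fin n) => -x) μ)) := by
  have hμ_sphere : ∀ᵐ x ∂μ, x ∈ Metric.sphere (0 : EuclideanSpace ℝ (Fin n)) 1 :=
    (ae_mem_iff_measure_eq Metric.isClosed_sphere.nullMeasurableSet).2 (by rw [hμ, measure_univ])
  have hμ_ball : ∀ᵐ x ∂μ, x ∈ Metric.closedBall (0 : EuclideanSpace ℝ (Fin n)) 1 :=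
    hμ_sphere.mono fun x hx => Metric.sphere_subset_closedBall hx
  have h := energy_neg_le_energy hD hμ_ball
  rw [neg_neg] at h
  rw [energy_smul_add_map_neg D hμ_ball]
  linarith
end

section
/- Let D be a symmetric n×n matrix with eigenvalues λ_max ≥ 0 and λ_min < 0, and corresponding unit eigenvectors z_max, z_min. If e^{λ_max} < cosh(λ_min), then δ_{z_max} is not a maximizer of the energy E(μ) = ∬ exp(⟪x, D y⟫) dμ(x) dμ(y): indeed E(δ_{z_max}) = e^{λ_max} < cosh(λ_min) = E((1/2)(δ_{z_min} + δ_{−z_min})). -/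
open MeasureTheory RealInnerProductSpace ENNReal

lemma integral_half_smul_dirac_add_dirac {α : Type*} [MeasurableSpace α]
    [MeasurableSingletonClass α] (f : α → ℝ) (a b : α) :
    ∫ x, f x ∂((2 : ℝ≥0∞)⁻¹ • (Measure.dirac a + Measure.dirac b)) = (f a + f b) / 2 := by
  rw [integral_smul_measure, integral_add_measure (integrable_dirac enorm_lt_top)
    (integrable_dirac enorm_lt_top), integral_dirac, integral_dirac]
  simp only [toReal_inv, toReal_ofNat, smul_eq_mul]
  ring

lemma inner_apply_self_of_eigenvector {E : Type*} [NormedAddCommGroup E]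
    [InnerProductSpace ℝ E] {T : E →ₗ[ℝ] E} {z : E} {lam : ℝ} (hz : ‖z‖ = 1)
    (heig : T z = lam • z) :
    ⟪z, T z⟫ = lam := by
  rw [heig, real_inner_smul_right, real_inner_self_eq_norm_sq, hz, one_pow, mul_one]

lemma energy_dirac {n : ℕ} (D : Matrix (Fin n) (Fin n) ℝ) (z : EuclideanSpace ℝ (Fin n)) :
    energy D (Measure.dirac z) = Real.exp ⟪z, Matrix.toEuclideanLin D z⟫ := by
  simp only [energy, integral_dirac]

/-- The cross terms `⟪±z, D (∓z)⟫ = -⟪z, D z⟫` turn the average of exponentials into `cosh`. -/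
lemma energy_half_smul_dirac_add_dirac_neg {n : ℕ} (D : Matrix (Fin n) (Fin n) ℝ)
    (z : EuclideanSpace ℝ (Fin n)) :
    energy D ((2 : ℝ≥0∞)⁻¹ • (Measure.dirac z + Measure.dirac (-z))) =
      Real.cosh ⟪z, Matrix.toEuclideanLin D z⟫ := by
  simp only [energy, integral_half_smul_dirac_add_dirac, map_neg, neg_neg,
    inner_neg_left, inner_neg_right, Real.cosh_eq]
  ring

theorem stmt14_general {n : ℕ} (D : Matrix (Fin n) (Fin n) ℝ)
    (lamMax lamMin : ℝ)
    (zMax zMin : EuclideanSpace ℝ (Fin n)) (hzMax : ‖zMax‖ = 1) (hzMin : ‖zMin‖ = 1)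
    (heigMax : Matrix.toEuclideanLin D zMax = lamMax • zMax)
    (heigMin : Matrix.toEuclideanLin D zMin = lamMin • zMin)
    (hlt : Real.exp lamMax < Real.cosh lamMin) :
    energy D (Measure.dirac zMax) = Real.exp lamMax ∧
    energy D ((2 : ℝ≥0∞)⁻¹ • (Measure.dirac zMin + Measure.dirac (-zMin))) =
      Real.cosh lamMin ∧
    energy D (Measure.dirac zMax) <
      energy D ((2 : ℝ≥0∞)⁻¹ • (Measure.dirac zMin + Measure.dirac (-zMin))) := by
  have hdirac : energy D (Measure.dirac zMax) = Real.exp lamMax := by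
    rw [energy_dirac, inner_apply_self_of_eigenvector hzMax heigMax]
  have hpair : energy D ((2 : ℝ≥0∞)⁻¹ • (Measure.dirac zMin + Measure.dirac (-zMin))) =
      Real.cosh lamMin := by
    rw [energy_half_smul_dirac_add_dirac_neg, inner_apply_self_of_eigenvector hzMin heigMin]
  exact ⟨hdirac, hpair, hdirac ▸ hpair ▸ hlt⟩

theorem stmt14 {n : ℕ} (D : Matrix (Fin n) (Fin n) ℝ) (hD : D.IsSymm)
    (lamMax lamMin : ℝ) (hmax0 : 0 ≤ lamMax) (hmin0 : lamMin < 0)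
    (zMax zMin : EuclideanSpace ℝ (Fin n)) (hzMax : ‖zMax‖ = 1) (hzMin : ‖zMin‖ = 1)
    (heigMax : Matrix.toEuclideanLin D zMax = lamMax • zMax)
    (heigMin : Matrix.toEuclideanLin D zMin = lamMin • zMin)
    (hlt : Real.exp lamMax < Real.cosh lamMin) :
    energy D (Measure.dirac zMax) = Real.exp lamMax ∧
    energy D ((2 : ℝ≥0∞)⁻¹ • (Measure.dirac zMin + Measure.dirac (-zMin))) =
      Real.cosh lamMin ∧
    energy D (Measure.dirac zMax) <
      energy D ((2 : ℝ≥0∞)⁻¹ • (Measure.dirac zMin + Measure.dirac (-zMin))) :=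
  stmt14_general D lamMax lamMin zMax zMin hzMax hzMin heigMax heigMin hlt
end

section
/- Let Z be a finite set of pairwise orthogonal unit eigenvectors of the symmetric matrix D, and let t : Z → [0,∞) with Σ_{z∈Z} t(z) = 1. Then the measure μ = (1/2) Σ_{z∈Z} t(z)(δ_z + δ_{−z}) satisfies the stationarity condition ∫_S e^{⟪w, D y⟫} P_w^⊥(D y) dμ(y) = 0 for every w ∈ Z ∪ (−Z). -/
/-!
Every point `y` of the support comes with its antipode `-y`, so the integral is a sum of the pair
terms `g y + g (-y)`, where `g y = exp ⟪w, Dy⟫ • P_w^⊥(Dy)`. Since `y ↦ ⟪w, Dy⟫` and `y ↦ P_w^⊥(Dy)`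
are odd, `g y + g (-y) = (exp a - exp (-a)) • P_w^⊥(Dy)` with `a = ⟪w, Dy⟫`. For an eigenvector `z`
this vanishes: if `z = ±w` then `Dz` is a multiple of the unit vector `w`, so `P_w^⊥(Dz) = 0`;
otherwise `z ⊥ w` and `a = ⟪w, Dz⟫ = λ ⟪w, z⟫ = 0`.
-/

open MeasureTheory RealInnerProductSpace ENNReal

section SymmetricDirac

variable {α E : Type*} [MeasurableSpace α] [MeasurableSingletonClass α] [Neg α]
  [NormedAddCommGroup E] [NormedSpace ℝ E] [CompleteSpace E]

theorem integral_sum_dirac_add_dirac_neg_eq_zero {f : α → E} (Z : Finset α) (c : α → ℝ≥0∞)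
    (hc : ∀ z ∈ Z, c z ≠ ∞) (hf : ∀ z ∈ Z, f z + f (-z) = 0) :
    ∫ y, f y ∂(∑ z ∈ Z, c z • (Measure.dirac z + Measure.dirac (-z))) = 0 := by
  have hint : ∀ a : α, Integrable f (Measure.dirac a) := fun a => integrable_dirac enorm_lt_top
  rw [integral_finsetSum_measure fun z hz => ((hint z).add_measure (hint (-z))).smul_measure (hc z hz)]
  refine Finset.sum_eq_zero fun z hz => ?_
  rw [integral_smul_measure, integral_add_measure (hint z) (hint (-z)), integral_dirac,
    integral_dirac, hf z hz, smul_zero]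

end SymmetricDirac

section Stationarity

variable {E : Type*} [NormedAddCommGroup E] [InnerProductSpace ℝ E]

noncomputable def stationarityIntegrand (T : E →ₗ[ℝ] E) (w y : E) : E :=
  Real.exp ⟪w, T y⟫ • (T y - ⟪w, T y⟫ • w)

theorem stationarityIntegrand_add_neg (T : E →ₗ[ℝ] E) (w y : E) :
    stationarityIntegrand T w y + stationarityIntegrand T w (-y) =
      (Real.exp ⟪w, T y⟫ - Real.exp (-⟪w, T y⟫)) • (T y - ⟪w, T y⟫ • w) := by
  simp only [stationarityIntegrand, map_neg, inner_neg_right]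
  module

theorem sub_inner_smul_eq_zero_of_eq_smul {w v : E} (hw : ‖w‖ = 1) {c : ℝ} (hv : v = c • w) :
    v - ⟪w, v⟫ • w = 0 := by
  rw [hv, real_inner_smul_right, real_inner_self_eq_norm_sq, hw, one_pow, mul_one, sub_self]

theorem stationarityIntegrand_add_neg_eq_zero_of_eq_smul {T : E →ₗ[ℝ] E} {w y : E} (hw : ‖w‖ = 1)
    {c : ℝ} (hy : T y = c • w) :
    stationarityIntegrand T w y + stationarityIntegrand T w (-y) = 0 := by
  rw [stationarityIntegrand_add_neg, sub_inner_smul_eq_zero_of_eq_smul hw hy, smul_zero]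

theorem stationarityIntegrand_add_neg_eq_zero_of_inner_eq_zero {T : E →ₗ[ℝ] E} {w y : E}
    (h : ⟪w, T y⟫ = 0) :
    stationarityIntegrand T w y + stationarityIntegrand T w (-y) = 0 := by
  rw [stationarityIntegrand_add_neg, h, neg_zero, sub_self, zero_smul]

theorem stationarityIntegrand_add_neg_eq_zero_of_eigenvector {T : E →ₗ[ℝ] E} {w z : E} {lam : ℝ}
    (hz : T z = lam • z) (hw : ‖w‖ = 1) (hwz : z = w ∨ z = -w ∨ ⟪w, z⟫ = 0) :
    stationarityIntegrand T w z + stationarityIntegrand T w (-z) = 0 := by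
  rcases hwz with rfl | rfl | horth
  · exact stationarityIntegrand_add_neg_eq_zero_of_eq_smul hw hz
  · exact stationarityIntegrand_add_neg_eq_zero_of_eq_smul hw (by rw [hz, smul_neg, ← neg_smul])
  · exact stationarityIntegrand_add_neg_eq_zero_of_inner_eq_zero
      (by rw [hz, real_inner_smul_right, horth, mul_zero])

end Stationarity

theorem stmt17_general {n : ℕ} (D : Matrix (Fin n) (Fin n) ℝ)
    (Z : Finset (EuclideanSpace ℝ (Fin n)))
    (hunit : ∀ z ∈ Z, ‖z‖ = 1)
    (heig : ∀ z ∈ Z, ∃ lam : ℝ, Matrix.toEuclideanLin D z = lam • z)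
    (horth : ∀ z ∈ Z, ∀ w ∈ Z, z ≠ w → ⟪z, w⟫ = 0)
    (t : EuclideanSpace ℝ (Fin n) → ℝ)
    (μ : Measure (EuclideanSpace ℝ (Fin n)))
    (hμ : μ = (2 : ℝ≥0∞)⁻¹ •
      ∑ z ∈ Z, ENNReal.ofReal (t z) • (Measure.dirac z + Measure.dirac (-z))) :
    ∀ w : EuclideanSpace ℝ (Fin n), (w ∈ Z ∨ -w ∈ Z) →
      (∫ y, Real.exp ⟪w, Matrix.toEuclideanLin D y⟫ •
          (Matrix.toEuclideanLin D y - ⟪w, Matrix.toEuclideanLin D y⟫ • w) ∂μ) = 0 := by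
  intro w hw
  have hw1 : ‖w‖ = 1 := by rcases hw with hw | hw <;> simpa using hunit _ hw
  have hpair : ∀ z ∈ Z, z = w ∨ z = -w ∨ ⟪w, z⟫ = 0 := by
    intro z hz
    by_cases hzw : z = w
    · exact .inl hzw
    by_cases hzw' : z = -w
    · exact .inr (.inl hzw')
    refine .inr (.inr ?_)
    rcases hw with hw | hw
    · rw [real_inner_comm]; exact horth z hz w hw hzw
    · simpa [real_inner_comm] using horth z hz (-w) hw hzw'
  change ∫ y, stationarityIntegrand (Matrix.toEuclideanLin D) w y ∂μ = 0
  rw [hμ, integral_smul_measure, integral_sum_dirac_add_dirac_neg_eq_zero Z _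
    (fun _ _ => ofReal_ne_top), smul_zero]
  intro z hz
  obtain ⟨lam, hlam⟩ := heig z hz
  exact stationarityIntegrand_add_neg_eq_zero_of_eigenvector hlam hw1 (hpair z hz)

theorem stmt17 {n : ℕ} (D : Matrix (Fin n) (Fin n) ℝ) (hD : D.IsSymm)
    (Z : Finset (EuclideanSpace ℝ (Fin n)))
    (hunit : ∀ z ∈ Z, ‖z‖ = 1)
    (heig : ∀ z ∈ Z, ∃ lam : ℝ, Matrix.toEuclideanLin D z = lam • z)
    (horth : ∀ z ∈ Z, ∀ w ∈ Z, z ≠ w → ⟪z, w⟫ = 0)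
    (t : EuclideanSpace ℝ (Fin n) → ℝ)
    (ht0 : ∀ z ∈ Z, 0 ≤ t z) (ht1 : ∑ z ∈ Z, t z = 1)
    (μ : Measure (EuclideanSpace ℝ (Fin n)))
    (hμ : μ = (2 : ℝ≥0∞)⁻¹ •
      ∑ z ∈ Z, ENNReal.ofReal (t z) • (Measure.dirac z + Measure.dirac (-z))) :
    ∀ w : EuclideanSpace ℝ (Fin n), (w ∈ Z ∨ -w ∈ Z) →
      (∫ y, Real.exp ⟪w, Matrix.toEuclideanLin D y⟫ •
          (Matrix.toEuclideanLin D y - ⟪w, Matrix.toEuclideanLin D y⟫ • w) ∂μ) = 0 :=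
  stmt17_general D Z hunit heig horth t μ hμ
end

section
/- Let n ≥ 2 and μ₀ the uniform probability measure on S^{n-1}. There exist constants C₂ > 0 and C₃ > 0, depending only on n, such that for every y ∈ S^{n-1} and every coordinate index 1 ≤ i ≤ n: ∫_{S^{n-1}} e^{⟪x, y⟫} x_i² dμ₀(x) = C₂ y_i² + C₃. -/
open MeasureTheory RealInnerProductSpace ENNReal

/-- The uniform (normalized surface) probability measure on the unit sphere of `ℝ^n`,
viewed as a measure on the ambient space. -/
noncomputable def uniformSphere (n : ℕ) : Measure (EuclideanSpace ℝ (Fin n)) :=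
  (((volume : Measure (EuclideanSpace ℝ (Fin n))).toSphere) Set.univ)⁻¹ •
    Measure.map Subtype.val ((volume : Measure (EuclideanSpace ℝ (Fin n))).toSphere)

/-!
The uniform measure on the sphere is invariant under linear isometries, and two pairs of vectors
with the same Gram matrix differ by an isometry (a product of two reflections). Fix an orthonormal
pair `e, f` and put `A = ∫ exp ⟪x, e⟫ ⟪x, e⟫²`, `B = ∫ exp ⟪x, e⟫ ⟪x, f⟫²`. Writing
`eᵢ = yᵢ y + w` with `w ⊥ y`, the integral splits as
`yᵢ² A + 2 yᵢ ∫ exp ⟪x, y⟫ ⟪x, y⟫ ⟪x, w⟫ + ‖w‖² B`; the middle term vanishes (reflect `w` to `-w`)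
and `‖w‖² = 1 - yᵢ²`, so `C₂ = A - B` and `C₃ = B`. For the positivity of `A - B`, symmetrising
under `e ↦ -e` and `e ↔ f` gives `2 (A - B) = ∫ (cosh ⟪x, e⟫ - cosh ⟪x, f⟫) (⟪x, e⟫² - ⟪x, f⟫²)`,
whose integrand is nonnegative.
-/

open scoped Pointwise

theorem exists_linearIsometryEquiv_apply_pair_eq {F : Type*} [NormedAddCommGroup F]
    [InnerProductSpace ℝ F] {u v u' v' : F} (hu : ‖u‖ = ‖u'‖) (hv : ‖v‖ = ‖v'‖)
    (huv : ⟪u, v⟫ = ⟪u', v'⟫) :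
    ∃ T : F ≃ₗᵢ[ℝ] F, T u = u' ∧ T v = v' := by
  set R₁ := (ℝ ∙ (u - u'))ᗮ.reflection
  have hR₁u : R₁ u = u' := Submodule.reflection_sub hu
  set R₂ := (ℝ ∙ (R₁ v - v'))ᗮ.reflection
  have hR₂ : R₂ (R₁ v) = v' := Submodule.reflection_sub (by rw [R₁.norm_map, hv])
  have hu' : R₂ u' = u' := by
    refine Submodule.reflection_mem_subspace_eq_self ?_
    have h : ⟪R₁ v, u'⟫ = ⟪v', u'⟫ := by
      conv_lhs => rw [← hR₁u, R₁.inner_map_map, real_inner_comm, huv]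
      exact real_inner_comm _ _
    rw [Submodule.mem_orthogonal_singleton_iff_inner_right, inner_sub_left, h, sub_self]
  exact ⟨R₁.trans R₂, by simp [hR₁u, hu'], hR₂⟩

theorem LinearEquiv.preimage_smul {R M N : Type*} [Semiring R] [AddCommMonoid M]
    [AddCommMonoid N] [Module R M] [Module R N] (T : M ≃ₗ[R] N) (s : Set R) (A : Set N) :
    T ⁻¹' (s • A) = s • T ⁻¹' A := by
  rw [← T.image_symm_eq_preimage, ← T.image_symm_eq_preimage, ← Set.image2_smul,
    ← Set.image2_smul, Set.image_image2, Set.image2_image_right]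
  simp

open Real in
theorem cosh_sub_cosh_mul_sq_sub_sq_nonneg (a b : ℝ) :
    0 ≤ (cosh a - cosh b) * (a ^ 2 - b ^ 2) := by
  rcases le_total |a| |b| with h | h
  · exact mul_nonneg_of_nonpos_of_nonpos (sub_nonpos.2 (cosh_le_cosh.2 h))
      (sub_nonpos.2 (sq_le_sq.2 h))
  · exact mul_nonneg (sub_nonneg.2 (cosh_le_cosh.2 h)) (sub_nonneg.2 (sq_le_sq.2 h))

section UniformSphere

open Set Metric Real

variable {n : ℕ}

local notation "E" => EuclideanSpace ℝ (Fin n)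

theorem map_uniformSphere (T : E ≃ₗᵢ[ℝ] E) :
    (uniformSphere n).map T = uniformSphere n := by
  ext s hs
  have hTs : MeasurableSet (T ⁻¹' s) := T.continuous.measurable hs
  rw [Measure.map_apply T.continuous.measurable hs, uniformSphere, Measure.smul_apply,
    Measure.smul_apply, Measure.map_apply measurable_subtype_coe hs,
    Measure.map_apply measurable_subtype_coe hTs,
    Measure.toSphere_apply' _ (measurable_subtype_coe hs),
    Measure.toSphere_apply' _ (measurable_subtype_coe hTs),
    Subtype.image_preimage_coe, Subtype.image_preimage_coe]
  have hpre : Ioo (0 : ℝ) 1 • (sphere (0 : E) 1 ∩ T ⁻¹' s) =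
      T ⁻¹' (Ioo (0 : ℝ) 1 • (sphere 0 1 ∩ s)) := by
    rw [← T.coe_toLinearEquiv, T.toLinearEquiv.preimage_smul, preimage_inter]
    simp
  rw [hpre, T.measurePreserving.measure_preimage_emb T.toHomeomorph.measurableEmbedding]

theorem integral_uniformSphere_comp (T : E ≃ₗᵢ[ℝ] E) (f : E → ℝ) :
    ∫ x, f (T x) ∂uniformSphere n = ∫ x, f x ∂uniformSphere n := by
  conv_rhs => rw [← map_uniformSphere T]
  exact (T.toHomeomorph.measurableEmbedding.integral_map f).symm

theorem integral_uniformSphere_inner_pair {u v u' v' : E} (hu : ‖u‖ = ‖u'‖) (hv : ‖v‖ = ‖v'‖)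
    (huv : ⟪u, v⟫ = ⟪u', v'⟫) (g : ℝ → ℝ → ℝ) :
    ∫ x, g ⟪x, u⟫ ⟪x, v⟫ ∂uniformSphere n = ∫ x, g ⟪x, u'⟫ ⟪x, v'⟫ ∂uniformSphere n := by
  obtain ⟨T, rfl, rfl⟩ := exists_linearIsometryEquiv_apply_pair_eq hu hv huv
  simp_rw [← integral_uniformSphere_comp T (fun x => g ⟪x, T u⟫ ⟪x, T v⟫), T.inner_map_map]

theorem integrable_uniformSphere (hn : 0 < n) {f : E → ℝ} (hf : Continuous f) :
    Integrable f (uniformSphere n) := by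
  have : Nonempty (Fin n) := ⟨⟨0, hn⟩⟩
  rw [uniformSphere, integrable_smul_measure (ENNReal.inv_ne_zero.2 (measure_ne_top _ _))
      (ENNReal.inv_ne_top.2 (Measure.measure_univ_ne_zero.2 (Measure.toSphere_ne_zero _))),
    (MeasurableEmbedding.subtype_coe isClosed_sphere.measurableSet).integrable_map_iff]
  exact (hf.comp continuous_subtype_val).integrable_of_hasCompactSupport
    (HasCompactSupport.of_compactSpace _)

theorem integral_uniformSphere_pos (hn : 0 < n) {f : E → ℝ} (hf : Continuous f) (hf₀ : 0 ≤ f)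
    {z : E} (hz : ‖z‖ = 1) (hfz : f z ≠ 0) : 0 < ∫ x, f x ∂uniformSphere n := by
  rw [integral_pos_iff_support_of_nonneg hf₀ (integrable_uniformSphere hn hf), uniformSphere,
    Measure.smul_apply, Measure.map_apply measurable_subtype_coe hf.isOpen_support.measurableSet,
    smul_eq_mul]
  refine ENNReal.mul_pos (ENNReal.inv_ne_zero.2 (measure_ne_top _ _))
    ((hf.isOpen_support.preimage continuous_subtype_val).measure_ne_zero _ ?_)
  exact ⟨⟨z, by simpa using hz⟩, hfz⟩

theorem integral_exp_inner_mul_inner_mul_inner_of_inner_eq_zero {y w : E} (hyw : ⟪y, w⟫ = 0) :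
    ∫ x, exp ⟪x, y⟫ * (⟪x, y⟫ * ⟪x, w⟫) ∂uniformSphere n = 0 := by
  have h := integral_uniformSphere_inner_pair (u' := y) (v' := -w) rfl (norm_neg w).symm
    (by rw [inner_neg_right, hyw, neg_zero]) (fun a b => exp a * (a * b))
  simp only [inner_neg_right, mul_neg, integral_neg] at h
  linarith

theorem integral_exp_inner_mul_inner_sq_of_inner_eq_zero {y w e f : E} (hy : ‖y‖ = ‖e‖)
    (hf : ‖f‖ = 1) (hyw : ⟪y, w⟫ = 0) (hef : ⟪e, f⟫ = 0) :
    ∫ x, exp ⟪x, y⟫ * ⟪x, w⟫ ^ 2 ∂uniformSphere n =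
      ‖w‖ ^ 2 * ∫ x, exp ⟪x, e⟫ * ⟪x, f⟫ ^ 2 ∂uniformSphere n := by
  rw [integral_uniformSphere_inner_pair hy (v' := ‖w‖ • f) (by simp [norm_smul, hf])
    (by rw [hyw, real_inner_smul_right, hef, mul_zero]) (fun a b => exp a * b ^ 2),
    ← integral_const_mul]
  simp only [real_inner_smul_right]
  congr 1 with x
  ring

theorem integral_exp_inner_mul_inner_sq (hn : 0 < n) {y e f : E} (hy : ‖y‖ = 1) (he : ‖e‖ = 1)
    (hf : ‖f‖ = 1) (hef : ⟪e, f⟫ = 0) (v : E) :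
    ∫ x, exp ⟪x, y⟫ * ⟪x, v⟫ ^ 2 ∂uniformSphere n =
      ⟪y, v⟫ ^ 2 * ∫ x, exp ⟪x, e⟫ * ⟪x, e⟫ ^ 2 ∂uniformSphere n +
        (‖v‖ ^ 2 - ⟪y, v⟫ ^ 2) * ∫ x, exp ⟪x, e⟫ * ⟪x, f⟫ ^ 2 ∂uniformSphere n := by
  set c := ⟪y, v⟫
  set w := v - c • y
  have hyw : ⟪y, w⟫ = 0 := by
    rw [inner_sub_right, real_inner_smul_right, real_inner_self_eq_norm_sq, hy]; ring
  have hw : ‖w‖ ^ 2 = ‖v‖ ^ 2 - c ^ 2 := by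
    rw [norm_sub_sq_real, real_inner_smul_right, norm_smul, mul_pow, real_inner_comm, hy,
      Real.norm_eq_abs, sq_abs]
    ring
  have hint : ∀ g : E → ℝ, Continuous g → Integrable g (uniformSphere n) :=
    fun g hg => integrable_uniformSphere hn hg
  have hsplit : ∀ x : E, exp ⟪x, y⟫ * ⟪x, v⟫ ^ 2 = c ^ 2 * (exp ⟪x, y⟫ * ⟪x, y⟫ ^ 2) +
      (2 * c * (exp ⟪x, y⟫ * (⟪x, y⟫ * ⟪x, w⟫)) + exp ⟪x, y⟫ * ⟪x, w⟫ ^ 2) := by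
    intro x
    rw [show v = c • y + w by simp [w], inner_add_right, real_inner_smul_right]
    ring
  simp_rw [hsplit]
  rw [integral_add (hint _ (by fun_prop)) (hint _ (by fun_prop)),
    integral_add (hint _ (by fun_prop)) (hint _ (by fun_prop)), integral_const_mul,
    integral_const_mul, integral_exp_inner_mul_inner_mul_inner_of_inner_eq_zero hyw,
    integral_uniformSphere_inner_pair (u' := e) (v' := e) (by rw [hy, he]) (by rw [hy, he])
      (by rw [real_inner_self_eq_norm_sq, real_inner_self_eq_norm_sq, hy, he])
      (fun a b => exp a * b ^ 2),
    integral_exp_inner_mul_inner_sq_of_inner_eq_zero (by rw [hy, he]) hf hyw hef, hw]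
  ring

theorem integral_exp_inner_mul_inner_sq_pos (hn : 0 < n) {e f : E} (hf : ‖f‖ = 1)
    (hef : ⟪e, f⟫ = 0) : 0 < ∫ x, exp ⟪x, e⟫ * ⟪x, f⟫ ^ 2 ∂uniformSphere n :=
  integral_uniformSphere_pos hn (by fun_prop) (fun x => by positivity) hf
    (by simp [real_inner_comm, hef, hf])

theorem two_mul_integral_exp_inner_mul_sq_sub_sq (hn : 0 < n) {e f : E} (he : ‖e‖ = 1)
    (hf : ‖f‖ = 1) (hef : ⟪e, f⟫ = 0) :
    2 * ∫ x, exp ⟪x, e⟫ * (⟪x, e⟫ ^ 2 - ⟪x, f⟫ ^ 2) ∂uniformSphere n =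
      ∫ x, (cosh ⟪x, e⟫ - cosh ⟪x, f⟫) * (⟪x, e⟫ ^ 2 - ⟪x, f⟫ ^ 2) ∂uniformSphere n := by
  have hint : ∀ g : E → ℝ, Continuous g → Integrable g (uniformSphere n) :=
    fun g hg => integrable_uniformSphere hn hg
  have hneg := integral_uniformSphere_inner_pair (u' := -e) (v' := f) (norm_neg e).symm rfl
    (by rw [inner_neg_left, hef, neg_zero]) (fun a b => exp a * (a ^ 2 - b ^ 2))
  have hswap := integral_uniformSphere_inner_pair (u' := f) (v' := e) (hf ▸ he) (he ▸ hf)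
    (by rw [hef, real_inner_comm, hef]) (fun a b => cosh a * (a ^ 2 - b ^ 2))
  simp only [inner_neg_right, neg_sq] at hneg
  have hmean : 2 * ∫ x, cosh ⟪x, e⟫ * (⟪x, e⟫ ^ 2 - ⟪x, f⟫ ^ 2) ∂uniformSphere n =
      (∫ x, exp ⟪x, e⟫ * (⟪x, e⟫ ^ 2 - ⟪x, f⟫ ^ 2) ∂uniformSphere n) +
        ∫ x, exp (-⟪x, e⟫) * (⟪x, e⟫ ^ 2 - ⟪x, f⟫ ^ 2) ∂uniformSphere n := by
    rw [← integral_add (hint _ (by fun_prop)) (hint _ (by fun_prop)), ← integral_const_mul]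
    congr 1 with x
    rw [cosh_eq]
    ring
  have hdiff : ∫ x, (cosh ⟪x, e⟫ - cosh ⟪x, f⟫) * (⟪x, e⟫ ^ 2 - ⟪x, f⟫ ^ 2) ∂uniformSphere n =
      (∫ x, cosh ⟪x, e⟫ * (⟪x, e⟫ ^ 2 - ⟪x, f⟫ ^ 2) ∂uniformSphere n) +
        ∫ x, cosh ⟪x, f⟫ * (⟪x, f⟫ ^ 2 - ⟪x, e⟫ ^ 2) ∂uniformSphere n := by
    rw [← integral_add (hint _ (by fun_prop)) (hint _ (by fun_prop))]
    congr 1 with x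
    ring
  linarith

theorem integral_exp_inner_mul_inner_sq_sub_pos (hn : 0 < n) {e f : E} (he : ‖e‖ = 1)
    (hf : ‖f‖ = 1) (hef : ⟪e, f⟫ = 0) :
    0 < (∫ x, exp ⟪x, e⟫ * ⟪x, e⟫ ^ 2 ∂uniformSphere n) -
      ∫ x, exp ⟪x, e⟫ * ⟪x, f⟫ ^ 2 ∂uniformSphere n := by
  rw [← integral_sub (integrable_uniformSphere hn (by fun_prop))
    (integrable_uniformSphere hn (by fun_prop))]
  simp only [← mul_sub]
  have hpos := integral_uniformSphere_pos hn (by fun_prop)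
    (fun x => cosh_sub_cosh_mul_sq_sub_sq_nonneg ⟪x, e⟫ ⟪x, f⟫) he
    (by simpa [he, hef, sub_eq_zero] using (one_lt_cosh.2 one_ne_zero).ne')
  rw [← two_mul_integral_exp_inner_mul_sq_sub_sq hn he hf hef] at hpos
  linarith

end UniformSphere

theorem stmt19 {n : ℕ} (hn : 2 ≤ n) :
    ∃ C₂ C₃ : ℝ, 0 < C₂ ∧ 0 < C₃ ∧
      ∀ y : EuclideanSpace ℝ (Fin n), ‖y‖ = 1 → ∀ i : Fin n,
        (∫ x, Real.exp ⟪x, y⟫ * (x i) ^ 2 ∂(uniformSphere n)) =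
          C₂ * (y i) ^ 2 + C₃ := by
  have hn₀ : 0 < n := by omega
  set e : EuclideanSpace ℝ (Fin n) := EuclideanSpace.single ⟨0, hn₀⟩ 1
  set f : EuclideanSpace ℝ (Fin n) := EuclideanSpace.single ⟨1, hn⟩ 1
  have he : ‖e‖ = 1 := by simp [e]
  have hf : ‖f‖ = 1 := by simp [f]
  have hef : ⟪e, f⟫ = 0 := by simp [e, f, EuclideanSpace.inner_single_left]
  refine ⟨_, _, integral_exp_inner_mul_inner_sq_sub_pos hn₀ he hf hef,
    integral_exp_inner_mul_inner_sq_pos hn₀ hf hef, fun y hy i => ?_⟩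
  have hmoment := integral_exp_inner_mul_inner_sq hn₀ hy he hf hef (EuclideanSpace.single i 1)
  simp only [EuclideanSpace.inner_single_right, one_mul, conj_trivial, PiLp.norm_single,
    norm_one, one_pow] at hmoment
  rw [hmoment]
  ring
end
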